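/- arXiv:2111.11580 — 6 statements merged into one kernel-verified Lean document; each statement's English description precedes it below -/
import Mathlib

section
/- There exists an element ζ ∈ 𝒪_0 whose multiplicative order is exactly q − 1, and for every such ζ and every integer m ≥ 1, each unit x of the ring R_m can be written uniquely as x = ζ^i · u with 0 ≤ i < q − 1 and u ∈ 1 + 𝔪̃_m; in other words, multiplication gives a group isomorphism ⟨ζ⟩ × (1 + 𝔪̃_m) ≅ R_m^×. -/
/-- The order `R_m = 𝒪_0 + 𝔪^m 𝒪_F`, as a subset of `F`. -/
def RmSet {F : Type} [Field F] (O0 OF : Subring F) (pi : F) (m : ℕ) : Set F :=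
  {x : F | ∃ a ∈ O0, ∃ b ∈ OF, x = a + pi ^ m * b}

/-- The set `𝔪̃_m = p 𝒪_0 + 𝔪^m 𝒪_F`, as a subset of `F`. -/
def mTildeSet {F : Type} [Field F] (p : ℕ) (O0 OF : Subring F) (pi : F) (m : ℕ) : Set F :=
  {x : F | ∃ a ∈ O0, ∃ b ∈ OF, x = (p : F) * a + pi ^ m * b}

/-- The set `1 + S` for a subset `S ⊆ F`. -/
def onePlusSet {F : Type} [Field F] (S : Set F) : Set F := {u : F | u - 1 ∈ S}


/-!
The residue field `k = 𝒪_F/𝔪` is a finite field with `q` elements, so `kˣ` is cyclic of order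
`q - 1`. Being `p`-adically complete, `𝒪_0` is Henselian, and since `𝒪_0/p ≅ k` Hensel's lemma for
`X^q - X` (whose derivative is `≡ -1`) lifts a generator of `kˣ` to a root `L ∈ 𝒪_0`, which then has
order exactly `q - 1`. Conversely, reduction mod `𝔪` is injective on `(q-1)`-th roots of unity
because `q - 1` is invertible in `k`, so every `ζ` of order `q - 1` reduces to a generator of `kˣ`.
Given a unit `x` of `R_m`, choose `i` with `x ≡ ζ^i`; then `u = ζ^(-i) x` lies in `R_m` and reduces
to `1`, and the elements of `R_m` reducing to `1` are exactly those of `1 + 𝔪̃_m`: the `𝒪_0`-part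
of such an element is `≡ 1 mod 𝔪`, hence `≡ 1 mod p`.
-/

namespace Subring

variable {R : Type*} [CommRing R] {S : Subring R}

theorem dvd_iff_exists_mem {a b : S} : a ∣ b ↔ ∃ c ∈ S, (b : R) = a * c := by
  constructor
  · rintro ⟨c, rfl⟩
    exact ⟨c, c.2, rfl⟩
  · rintro ⟨c, hc, h⟩
    exact ⟨⟨c, hc⟩, Subtype.ext h⟩

theorem isUnit_iff_exists_mem {a : S} : IsUnit a ↔ ∃ c ∈ S, (a : R) * c = 1 := by
  rw [isUnit_iff_exists_inv]
  constructor
  · rintro ⟨c, hc⟩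
    exact ⟨c, c.2, congrArg Subtype.val hc⟩
  · rintro ⟨c, hc, h⟩
    exact ⟨⟨c, hc⟩, Subtype.ext h⟩

end Subring

theorem Ideal.isMaximal_span_singleton_of_forall_not_dvd {A : Type*} [CommRing A] {a : A}
    (ha : ¬IsUnit a) (h : ∀ x, ¬a ∣ x → IsUnit x) : (Ideal.span {a}).IsMaximal := by
  rw [Ideal.isMaximal_iff, Ideal.mem_span_singleton]
  refine ⟨fun h1 => ha (isUnit_of_dvd_one h1), fun J x _ hx hxJ => ?_⟩
  rw [Ideal.mem_span_singleton] at hx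
  exact (Ideal.eq_top_iff_one J).1 (Ideal.eq_top_of_isUnit_mem J hxJ (h x hx))

theorem smodEq_span_singleton_pow_iff {R : Type*} [CommRing R] {p x y : R} {n : ℕ} :
    x ≡ y [SMOD ((Ideal.span {p}) ^ n • ⊤ : Submodule R R)] ↔ p ^ n ∣ x - y := by
  rw [SModEq.sub_mem, smul_eq_mul, Ideal.mul_top, Ideal.span_singleton_pow,
    Ideal.mem_span_singleton]

theorem isHausdorff_span_singleton_of_eq_pow_mul_unit {R : Type*} [CommRing R] [IsDomain R]
    {p : R} (hp : ¬IsUnit p) (h : ∀ x ≠ 0, ∃ n : ℕ, ∃ u, IsUnit u ∧ x = p ^ n * u) :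
    IsHausdorff (Ideal.span {p}) R := by
  refine ⟨fun x hx => by_contra fun hx0 => ?_⟩
  obtain ⟨n, u, hu, rfl⟩ := h x hx0
  have hdvd : p ^ n * p ∣ p ^ n * u := by
    simpa [pow_succ] using smodEq_span_singleton_pow_iff.1 (hx (n + 1))
  exact hp (isUnit_of_dvd_unit ((mul_dvd_mul_iff_left (left_ne_zero_of_mul hx0)).1 hdvd) hu)

theorem isPrecomplete_span_singleton_of_exists_limit {R : Type*} [CommRing R] {p : R}
    (h : ∀ a : ℕ → R, (∀ n, p ^ n ∣ a (n + 1) - a n) → ∃ L, ∀ n, p ^ n ∣ L - a n) :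
    IsPrecomplete (Ideal.span {p}) R := by
  refine ⟨fun a ha => ?_⟩
  obtain ⟨L, hL⟩ := h a fun n => dvd_sub_comm.1 (smodEq_span_singleton_pow_iff.1 (ha n.le_succ))
  exact ⟨L, fun n => smodEq_span_singleton_pow_iff.2 (dvd_sub_comm.1 (hL n))⟩

open Polynomial in
theorem HenselianRing.exists_pow_eq_self_sub_mem {R : Type*} [CommRing R] {I : Ideal R}
    [HenselianRing R I] {q : ℕ} (hq2 : 2 ≤ q) (hq : (q : R) ∈ I) {a : R} (ha : a ^ q - a ∈ I) :
    ∃ L : R, L ^ q = L ∧ L - a ∈ I := by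
  have hmonic : (X ^ q - X : R[X]).Monic :=
    monic_X_pow_sub (degree_X_le.trans_lt (by exact_mod_cast hq2))
  have hq' : (q : R ⧸ I) = 0 := by
    rw [← map_natCast (Ideal.Quotient.mk I), Ideal.Quotient.eq_zero_iff_mem]
    exact hq
  have hunit : IsUnit (Ideal.Quotient.mk I ((X ^ q - X : R[X]).derivative.eval a)) := by
    simp [derivative_X_pow, hq']
  obtain ⟨L, hL, hLa⟩ := HenselianRing.is_henselian _ hmonic a (by simpa using ha) hunit
  exact ⟨L, by simpa [sub_eq_zero] using hL, hLa⟩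

theorem IsPrimitiveRoot.of_map_of_pow_eq_one {M N G : Type*} [CommMonoid M] [CommMonoid N]
    [FunLike G M N] [MonoidHomClass G M N] {f : G} {ζ : M} {n : ℕ}
    (h : IsPrimitiveRoot (f ζ) n) (hζ : ζ ^ n = 1) : IsPrimitiveRoot ζ n :=
  ⟨hζ, fun l hl => h.dvd_of_pow_eq_one l (by rw [← map_pow, hl, map_one])⟩

theorem eq_one_of_pow_eq_one_of_map_eq_one {A K : Type*} [CommRing A] [IsDomain A]
    [CommSemiring K] (f : A →+* K) {n : ℕ} (hn : (n : K) ≠ 0) {w : A} (hw : w ^ n = 1)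
    (hfw : f w = 1) : w = 1 := by
  have hsum : ∑ i ∈ Finset.range n, w ^ i ≠ 0 := fun h0 => hn (by simpa [hfw] using congrArg f h0)
  have hmul : (∑ i ∈ Finset.range n, w ^ i) * (w - 1) = 0 := by rw [geom_sum_mul, hw, sub_self]
  exact sub_eq_zero.1 ((mul_eq_zero.1 hmul).resolve_left hsum)

theorem IsPrimitiveRoot.map_of_natCast_ne_zero {A K : Type*} [CommRing A] [IsDomain A]
    [CommSemiring K] (f : A →+* K) {ζ : A} {n : ℕ} (h : IsPrimitiveRoot ζ n) (hn : (n : K) ≠ 0) :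
    IsPrimitiveRoot (f ζ) n := by
  refine ⟨by rw [← map_pow, h.pow_eq_one, map_one], fun l hl => h.dvd_of_pow_eq_one l ?_⟩
  refine eq_one_of_pow_eq_one_of_map_eq_one f hn ?_ (by rw [map_pow, hl])
  rw [← pow_mul, mul_comm, pow_mul, h.pow_eq_one, one_pow]

section FiniteField

variable {k : Type*} [Field k] [Fintype k]

theorem FiniteField.natCast_card_sub_one_ne_zero : ((Fintype.card k - 1 : ℕ) : k) ≠ 0 := by
  rw [Nat.cast_sub Fintype.card_pos, FiniteField.cast_card_eq_zero, Nat.cast_one, zero_sub]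
  exact neg_ne_zero.2 one_ne_zero

theorem exists_isPrimitiveRoot_of_henselianRing {R : Type*} [CommRing R] [IsDomain R]
    (f : R →+* k) (hf : Function.Surjective f) (I : Ideal R) [HenselianRing R I]
    (hI : RingHom.ker f = I) : ∃ L : R, IsPrimitiveRoot L (Fintype.card k - 1) := by
  classical
  obtain ⟨g, hg⟩ := IsCyclic.exists_ofOrder_eq_natCard (α := kˣ)
  rw [Nat.card_eq_fintype_card, Fintype.card_units, ← orderOf_units] at hg
  obtain ⟨a, ha⟩ := hf g
  subst hI
  obtain ⟨L, hLq, hLa⟩ := HenselianRing.exists_pow_eq_self_sub_mem (I := RingHom.ker f)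
    (q := Fintype.card k) Fintype.one_lt_card (by simp) (a := a) (by simp [FiniteField.pow_card])
  have hfL : f L = g := by rwa [RingHom.mem_ker, map_sub, sub_eq_zero, ha] at hLa
  have hL0 : L ≠ 0 := by
    rintro rfl
    exact g.ne_zero (by rw [← hfL, map_zero])
  have hfLprim : IsPrimitiveRoot (f L) (Fintype.card k - 1) := by
    rw [hfL, IsPrimitiveRoot.iff_orderOf, hg]
  refine ⟨L, hfLprim.of_map_of_pow_eq_one ?_⟩
  refine mul_right_cancel₀ hL0 ?_
  rw [← pow_succ, Nat.sub_add_cancel Fintype.card_pos, hLq, one_mul]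

theorem existsUnique_pow_mul_of_isPrimitiveRoot {A : Type*} [CommRing A] (f : A →+* k) {ζ : A}
    (hζ : ζ ^ (Fintype.card k - 1) = 1) (hfζ : IsPrimitiveRoot (f ζ) (Fintype.card k - 1))
    {x : A} (hx : f x ≠ 0) :
    ∃! iu : ℕ × A, iu.1 < Fintype.card k - 1 ∧ f iu.2 = 1 ∧ x = ζ ^ iu.1 * iu.2 := by
  classical
  set n := Fintype.card k - 1
  have : NeZero n := ⟨by simpa [n, Fintype.card_units] using (Fintype.card_ne_zero (α := kˣ))⟩
  obtain ⟨i, hi, hfx⟩ := hfζ.eq_pow_of_pow_eq_one (FiniteField.pow_card_sub_one_eq_one _ hx)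
  have hinv : ζ ^ (n - i) * ζ ^ i = 1 := by rw [← pow_add, Nat.sub_add_cancel hi.le, hζ]
  refine ⟨(i, ζ ^ (n - i) * x), ⟨hi, ?_, ?_⟩, ?_⟩
  · rw [map_mul, ← hfx, ← map_pow, ← map_mul, hinv, map_one]
  · rw [← mul_assoc, mul_comm (ζ ^ i), hinv, one_mul]
  · rintro ⟨j, v⟩ ⟨hj, hv, rfl⟩
    have hji : j = i := hfζ.pow_inj hj hi (by rw [hfx, map_mul, map_pow, hv, mul_one])
    subst hji
    rw [← mul_assoc, hinv, one_mul]

end FiniteField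

section Setting

variable {F : Type} [Field F] {O0 OF : Subring F} {pi : F}

def RmSubring (hO0F : O0 ≤ OF) (hpimem : pi ∈ OF) (m : ℕ) : Subring F where
  carrier := RmSet O0 OF pi m
  mul_mem' := by
    rintro _ _ ⟨a, ha, b, hb, rfl⟩ ⟨a', ha', b', hb', rfl⟩
    refine ⟨a * a', mul_mem ha ha', a * b' + b * a' + pi ^ m * b * b', ?_, by ring⟩
    exact add_mem (add_mem (mul_mem (hO0F ha) hb') (mul_mem hb (hO0F ha')))
      (mul_mem (mul_mem (pow_mem hpimem m) hb) hb')
  one_mem' := ⟨1, one_mem _, 0, zero_mem _, by ring⟩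
  add_mem' := by
    rintro _ _ ⟨a, ha, b, hb, rfl⟩ ⟨a', ha', b', hb', rfl⟩
    exact ⟨a + a', add_mem ha ha', b + b', add_mem hb hb', by ring⟩
  zero_mem' := ⟨0, zero_mem _, 0, zero_mem _, by ring⟩
  neg_mem' := by
    rintro _ ⟨a, ha, b, hb, rfl⟩
    exact ⟨-a, neg_mem ha, -b, neg_mem hb, by ring⟩

theorem RmSubring_le (hO0F : O0 ≤ OF) (hpimem : pi ∈ OF) (m : ℕ) :
    RmSubring hO0F hpimem m ≤ OF := by
  rintro _ ⟨a, ha, b, hb, rfl⟩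
  exact add_mem (hO0F ha) (mul_mem (pow_mem hpimem m) hb)

theorem le_RmSubring (hO0F : O0 ≤ OF) (hpimem : pi ∈ OF) (m : ℕ) :
    O0 ≤ RmSubring hO0F hpimem m :=
  fun a ha => ⟨a, ha, 0, zero_mem _, by ring⟩

theorem exists_eq_pi_mul_of_eq_pow_mul (hpimem : pi ∈ OF) {e : ℕ} (he : 1 ≤ e) {x u : F}
    (hu : u ∈ OF) (hxu : x = pi ^ e * u) : ∃ y ∈ OF, x = pi * y := by
  refine ⟨pi ^ (e - 1) * u, mul_mem (pow_mem hpimem _) hu, ?_⟩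
  rw [hxu, ← mul_assoc, ← pow_succ', Nat.sub_add_cancel he]

theorem onePlusSet_mTildeSet_subset_RmSet {p m : ℕ} :
    onePlusSet (mTildeSet p O0 OF pi m) ⊆ RmSet O0 OF pi m := by
  rintro u ⟨a, ha, b, hb, h⟩
  exact ⟨1 + p * a, add_mem (one_mem _) (mul_mem (natCast_mem _ p) ha), b, hb,
    by linear_combination h⟩

theorem mem_onePlusSet_mTildeSet_iff {p m : ℕ} (hO0F : O0 ≤ OF) (hpimem : pi ∈ OF)
    (hpπ : ∃ y ∈ OF, (p : F) = pi * y)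
    (hres_inj : ∀ a ∈ O0, (∃ y ∈ OF, a = pi * y) → ∃ b ∈ O0, a = (p : F) * b)
    (hm : 1 ≤ m) {u : F} (hu : u ∈ RmSet O0 OF pi m) :
    u ∈ onePlusSet (mTildeSet p O0 OF pi m) ↔ ∃ y ∈ OF, u - 1 = pi * y := by
  obtain ⟨n, rfl⟩ : ∃ n, m = n + 1 := ⟨m - 1, by omega⟩
  obtain ⟨y, hy, hpy⟩ := hpπ
  constructor
  · rintro ⟨a, ha, b, hb, hab⟩
    refine ⟨y * a + pi ^ n * b, add_mem (mul_mem hy (hO0F ha)) (mul_mem (pow_mem hpimem n) hb), ?_⟩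
    rw [hab, hpy]
    ring
  · rintro ⟨c, hc, hu1⟩
    obtain ⟨a, ha, b, hb, rfl⟩ := hu
    obtain ⟨d, hd, had⟩ := hres_inj (a - 1) (sub_mem ha (one_mem _))
      ⟨c - pi ^ n * b, sub_mem hc (mul_mem (pow_mem hpimem n) hb), by linear_combination hu1⟩
    exact ⟨d, hd, b, hb, by linear_combination had⟩

theorem not_isUnit_natCast_of_eq_pi_mul {p : ℕ} (hO0F : O0 ≤ OF)
    (hpπ : ∃ y ∈ OF, (p : F) = pi * y) (hpinotunit : ¬ ∃ z ∈ OF, pi * z = 1) :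
    ¬IsUnit (p : O0) := by
  rw [Subring.isUnit_iff_exists_mem]
  rintro ⟨c, hc, hpc⟩
  obtain ⟨y, hy, hpy⟩ := hpπ
  refine hpinotunit ⟨y * c, mul_mem hy (hO0F hc), ?_⟩
  rw [← mul_assoc, ← hpy]
  simpa using hpc

theorem isAdicComplete_span_natCast {p : ℕ} (hp : ¬IsUnit (p : O0))
    (hO0dvr : ∀ x ∈ O0, x ≠ (0 : F) →
      ∃ n : ℕ, ∃ u ∈ O0, (∃ w ∈ O0, u * w = 1) ∧ x = (p : F) ^ n * u)
    (hO0complete : ∀ a : ℕ → F, (∀ n, a n ∈ O0) →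
      (∀ n, ∃ y ∈ O0, a (n + 1) - a n = (p : F) ^ n * y) →
      ∃ L ∈ O0, ∀ n, ∃ y ∈ O0, L - a n = (p : F) ^ n * y) :
    IsAdicComplete (Ideal.span {(p : O0)}) O0 where
  toIsHausdorff := isHausdorff_span_singleton_of_eq_pow_mul_unit hp fun x hx => by
    obtain ⟨n, u, hu, hunit, hxu⟩ := hO0dvr x x.2 (by simpa using hx)
    exact ⟨n, ⟨u, hu⟩, Subring.isUnit_iff_exists_mem.2 hunit, Subtype.ext (by simpa using hxu)⟩
  toIsPrecomplete := isPrecomplete_span_singleton_of_exists_limit fun a ha => by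
    obtain ⟨L, hL, hlim⟩ := hO0complete (fun n => a n) (fun n => (a n).2) fun n => by
      obtain ⟨c, hc, h⟩ := Subring.dvd_iff_exists_mem.1 (ha n)
      exact ⟨c, hc, by simpa using h⟩
    exact ⟨⟨L, hL⟩, fun n => Subring.dvd_iff_exists_mem.2 (by simpa using hlim n)⟩

theorem exists_finite_residueField (hpimem : pi ∈ OF)
    (hmax : ∀ x ∈ OF, (¬ ∃ y ∈ OF, x = pi * y) → ∃ z ∈ OF, x * z = 1)
    (hpinotunit : ¬ ∃ z ∈ OF, pi * z = 1) {q : ℕ}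
    (hq : ∃ s : Finset F, s.card = q ∧ (↑s : Set F) ⊆ (OF : Set F) ∧
      (∀ x ∈ OF, ∃ a ∈ s, ∃ y ∈ OF, x - a = pi * y) ∧
      (∀ a ∈ s, ∀ b ∈ s, (∃ y ∈ OF, a - b = pi * y) → a = b)) :
    ∃ (k : Type) (_ : Field k) (_ : Fintype k) (res : OF →+* k), Function.Surjective res ∧
      Fintype.card k = q ∧ ∀ x : OF, res x = 0 ↔ ∃ y ∈ OF, (x : F) = pi * y := by
  set I := Ideal.span {(⟨pi, hpimem⟩ : OF)}
  have hI : ∀ x : OF, x ∈ I ↔ ∃ y ∈ OF, (x : F) = pi * y := fun x => by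
    rw [Ideal.mem_span_singleton, Subring.dvd_iff_exists_mem]
  have : I.IsMaximal := Ideal.isMaximal_span_singleton_of_forall_not_dvd
    (by rwa [Subring.isUnit_iff_exists_mem]) fun x hx =>
      Subring.isUnit_iff_exists_mem.2 (hmax x x.2 fun h => hx (Subring.dvd_iff_exists_mem.2 h))
  obtain ⟨s, hcard, hsOF, hrep, hsep⟩ := hq
  have hbij : Function.Bijective fun a : s => Ideal.Quotient.mk I ⟨a, hsOF a.2⟩ := by
    refine ⟨fun a b hab => Subtype.ext (hsep a a.2 b b.2 ?_), fun y => ?_⟩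
    · exact (hI _).1 (Ideal.Quotient.eq.1 hab)
    · obtain ⟨x, rfl⟩ := Ideal.Quotient.mk_surjective y
      obtain ⟨a, ha, c, hc, hxa⟩ := hrep x x.2
      refine ⟨⟨a, ha⟩, Ideal.Quotient.eq.2 ((hI _).2 ⟨-c, neg_mem hc, ?_⟩)⟩
      simp only [AddSubgroupClass.coe_sub]
      linear_combination -hxa
  let _ := Fintype.ofBijective _ hbij
  refine ⟨OF ⧸ I, Ideal.Quotient.field I, inferInstance, Ideal.Quotient.mk I,
    Ideal.Quotient.mk_surjective, ?_, fun x => by rw [Ideal.Quotient.eq_zero_iff_mem, hI]⟩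
  rw [← Fintype.card_of_bijective hbij, Fintype.card_coe, hcard]

variable {k : Type*}

theorem surjective_comp_inclusion [Ring k] (res : OF →+* k) (hres : Function.Surjective res)
    (hker : ∀ x : OF, res x = 0 ↔ ∃ y ∈ OF, (x : F) = pi * y) (hO0F : O0 ≤ OF)
    (hres_surj : ∀ x ∈ OF, ∃ a ∈ O0, ∃ y ∈ OF, x - a = pi * y) :
    Function.Surjective (res.comp (Subring.inclusion hO0F)) := by
  intro y
  obtain ⟨x, rfl⟩ := hres y
  obtain ⟨a, ha, c, hc, hxa⟩ := hres_surj x x.2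
  refine ⟨⟨a, ha⟩, ?_⟩
  rw [RingHom.comp_apply, ← sub_eq_zero, ← map_sub, hker]
  exact ⟨-c, neg_mem hc, by simp; linear_combination -hxa⟩

theorem ker_comp_inclusion_eq_span [Ring k] {p : ℕ} (res : OF →+* k)
    (hker : ∀ x : OF, res x = 0 ↔ ∃ y ∈ OF, (x : F) = pi * y) (hO0F : O0 ≤ OF)
    (hpπ : ∃ y ∈ OF, (p : F) = pi * y)
    (hres_inj : ∀ a ∈ O0, (∃ y ∈ OF, a = pi * y) → ∃ b ∈ O0, a = (p : F) * b) :
    RingHom.ker (res.comp (Subring.inclusion hO0F)) = Ideal.span {(p : O0)} := by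
  ext a
  rw [RingHom.mem_ker, RingHom.comp_apply, hker, Ideal.mem_span_singleton,
    Subring.dvd_iff_exists_mem]
  simp only [Subring.coe_inclusion, SubringClass.coe_natCast]
  refine ⟨hres_inj a a.2, ?_⟩
  rintro ⟨c, hc, hac⟩
  obtain ⟨y, hy, hpy⟩ := hpπ
  exact ⟨y * c, mul_mem hy (hO0F hc), by rw [hac, hpy]; ring⟩

theorem existsUnique_pow_mul_mem_onePlusSet [Field k] [Fintype k] {p m : ℕ} (res : OF →+* k)
    (hker : ∀ x : OF, res x = 0 ↔ ∃ y ∈ OF, (x : F) = pi * y) (hO0F : O0 ≤ OF)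
    (hpimem : pi ∈ OF) (hpinotunit : ¬ ∃ z ∈ OF, pi * z = 1)
    (hpπ : ∃ y ∈ OF, (p : F) = pi * y)
    (hres_inj : ∀ a ∈ O0, (∃ y ∈ OF, a = pi * y) → ∃ b ∈ O0, a = (p : F) * b)
    {z : F} (hzO0 : z ∈ O0) (hz : IsPrimitiveRoot z (Fintype.card k - 1)) (hm : 1 ≤ m)
    {x : F} (hx : x ∈ RmSet O0 OF pi m) (hxunit : ∃ w ∈ RmSet O0 OF pi m, x * w = 1) :
    ∃! iu : ℕ × F, iu.1 < Fintype.card k - 1 ∧ iu.2 ∈ onePlusSet (mTildeSet p O0 OF pi m) ∧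
      x = z ^ iu.1 * iu.2 := by
  set Rm := RmSubring hO0F hpimem m
  set f := res.comp (Subring.inclusion (RmSubring_le hO0F hpimem m))
  have hmem : ∀ u : Rm, (u : F) ∈ onePlusSet (mTildeSet p O0 OF pi m) ↔ f u = 1 := fun u => by
    rw [mem_onePlusSet_mTildeSet_iff hO0F hpimem hpπ hres_inj hm u.2, ← sub_eq_zero,
      ← map_one f, ← map_sub, RingHom.comp_apply, hker]
    simp
  have hζ : IsPrimitiveRoot (⟨z, le_RmSubring hO0F hpimem m hzO0⟩ : Rm) (Fintype.card k - 1) :=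
    hz.of_map_of_injective (f := Rm.subtype) Subtype.val_injective
  have hfx : f ⟨x, hx⟩ ≠ 0 := by
    obtain ⟨w, hw, hxw⟩ := hxunit
    rw [RingHom.comp_apply, Ne, hker]
    rintro ⟨y, hy, hxy⟩
    refine hpinotunit ⟨y * w, mul_mem hy (RmSubring_le hO0F hpimem m hw), ?_⟩
    rw [← mul_assoc, ← hxy]
    exact hxw
  obtain ⟨⟨i, u⟩, ⟨hi, hu, hxu⟩, huniq⟩ := existsUnique_pow_mul_of_isPrimitiveRoot f
    hζ.pow_eq_one (hζ.map_of_natCast_ne_zero f FiniteField.natCast_card_sub_one_ne_zero) hfx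
  refine ⟨(i, u), ⟨hi, (hmem u).2 hu, by simpa using congrArg Subtype.val hxu⟩, ?_⟩
  rintro ⟨j, v⟩ ⟨hj, hv, hxv⟩
  have hvR : v ∈ Rm := onePlusSet_mTildeSet_subset_RmSet hv
  have := huniq (j, ⟨v, hvR⟩) ⟨hj, (hmem ⟨v, hvR⟩).1 hv, Subtype.ext (by simpa using hxv)⟩
  simp only [Prod.mk.injEq] at this ⊢
  exact ⟨this.1, congrArg Subtype.val this.2⟩

end Setting

theorem stmt_2_general
    (p : ℕ)
    (F : Type) [Field F]
    (OF O0 : Subring F) (hO0F : O0 ≤ OF)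
    (pi : F) (hpimem : pi ∈ OF)
    -- `𝔪 = π 𝒪_F` is the maximal ideal of `𝒪_F`:
    (hmax : ∀ x ∈ OF, (¬ ∃ y ∈ OF, x = pi * y) → ∃ z ∈ OF, x * z = 1)
    (hpinotunit : ¬ ∃ z ∈ OF, pi * z = 1)
    -- the absolute ramification index `e`, i.e. `p 𝒪_F = 𝔪^e`:
    (e : ℕ) (he : 1 ≤ e)
    (hram : ∃ u ∈ OF, (∃ w ∈ OF, u * w = 1) ∧ (p : F) = pi ^ e * u)
    -- `𝒪_0` is a complete discrete valuation ring with maximal ideal `p 𝒪_0`: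
    (hO0dvr : ∀ x ∈ O0, x ≠ (0 : F) →
      ∃ n : ℕ, ∃ u ∈ O0, (∃ w ∈ O0, u * w = 1) ∧ x = (p : F) ^ n * u)
    (hO0complete : ∀ a : ℕ → F, (∀ n, a n ∈ O0) →
      (∀ n, ∃ y ∈ O0, a (n + 1) - a n = (p : F) ^ n * y) →
      ∃ L ∈ O0, ∀ n, ∃ y ∈ O0, L - a n = (p : F) ^ n * y)
    -- the inclusion `𝒪_0 ⊆ 𝒪_F` induces an isomorphism of residue fields:
    (hres_surj : ∀ x ∈ OF, ∃ a ∈ O0, ∃ y ∈ OF, x - a = pi * y)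
    (hres_inj : ∀ a ∈ O0, (∃ y ∈ OF, a = pi * y) → ∃ b ∈ O0, a = (p : F) * b)
    -- the residue field is finite of cardinality `q`:
    (q : ℕ)
    (hq : ∃ s : Finset F, s.card = q ∧ (↑s : Set F) ⊆ (OF : Set F) ∧
      (∀ x ∈ OF, ∃ a ∈ s, ∃ y ∈ OF, x - a = pi * y) ∧
      (∀ a ∈ s, ∀ b ∈ s, (∃ y ∈ OF, a - b = pi * y) → a = b))
    :
    -- there is an element of `𝒪_0` of multiplicative order exactly `q - 1`:
    (∃ z : F, z ∈ O0 ∧ z ^ (q - 1) = 1 ∧ ∀ j : ℕ, 0 < j → j < q - 1 → z ^ j ≠ 1) ∧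
    -- for every such element and every `m ≥ 1`, each unit of `R_m` decomposes uniquely:
    (∀ z : F, z ∈ O0 → z ^ (q - 1) = 1 → (∀ j : ℕ, 0 < j → j < q - 1 → z ^ j ≠ 1) →
      ∀ m : ℕ, 1 ≤ m → ∀ x : F, x ∈ RmSet O0 OF pi m →
        (∃ w ∈ RmSet O0 OF pi m, x * w = 1) →
        ∃! iu : ℕ × F, iu.1 < q - 1 ∧ iu.2 ∈ onePlusSet (mTildeSet p O0 OF pi m) ∧
          x = z ^ iu.1 * iu.2) := by
  obtain ⟨k, _, _, res, hres, rfl, hker⟩ := exists_finite_residueField hpimem hmax hpinotunit hq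
  obtain ⟨u, hu, -, hpu⟩ := hram
  have hpπ := exists_eq_pi_mul_of_eq_pow_mul hpimem he hu hpu
  have := isAdicComplete_span_natCast (not_isUnit_natCast_of_eq_pi_mul hO0F hpπ hpinotunit)
    hO0dvr hO0complete
  refine ⟨?_, fun z hzO0 hz hzlt m hm x hx hxunit => ?_⟩
  · obtain ⟨L, hL⟩ := exists_isPrimitiveRoot_of_henselianRing _
      (surjective_comp_inclusion res hres hker hO0F hres_surj) _
      (ker_comp_inclusion_eq_span res hker hO0F hpπ hres_inj)
    have hLF := hL.map_of_injective (f := O0.subtype) Subtype.val_injective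
    exact ⟨L, L.2, hLF.pow_eq_one, fun j hj hjlt => hLF.pow_ne_one_of_pos_of_lt hj.ne' hjlt⟩
  · exact existsUnique_pow_mul_mem_onePlusSet res hker hO0F hpimem hpinotunit hpπ hres_inj hzO0
      (IsPrimitiveRoot.mk_of_lt z (Nat.sub_pos_of_lt Fintype.one_lt_card) hz hzlt) hm hx hxunit

theorem stmt_2
    (p : ℕ) (hp : Nat.Prime p)
    (F : Type) [Field F]
    (OF O0 : Subring F) (hO0F : O0 ≤ OF)
    (pi : F) (hpimem : pi ∈ OF) (hpi0 : pi ≠ 0)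
    -- `𝒪_F` is the valuation ring of `F`:
    (hval : ∀ x : F, x ≠ 0 → x ∈ OF ∨ x⁻¹ ∈ OF)
    -- `𝔪 = π 𝒪_F` is the maximal ideal of `𝒪_F`:
    (hmax : ∀ x ∈ OF, (¬ ∃ y ∈ OF, x = pi * y) → ∃ z ∈ OF, x * z = 1)
    (hpinotunit : ¬ ∃ z ∈ OF, pi * z = 1)
    -- the absolute ramification index `e`, i.e. `p 𝒪_F = 𝔪^e`:
    (e : ℕ) (he : 1 ≤ e)
    (hram : ∃ u ∈ OF, (∃ w ∈ OF, u * w = 1) ∧ (p : F) = pi ^ e * u)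
    -- `𝒪_0` is a complete discrete valuation ring with maximal ideal `p 𝒪_0`:
    (hO0dvr : ∀ x ∈ O0, x ≠ (0 : F) →
      ∃ n : ℕ, ∃ u ∈ O0, (∃ w ∈ O0, u * w = 1) ∧ x = (p : F) ^ n * u)
    (hO0complete : ∀ a : ℕ → F, (∀ n, a n ∈ O0) →
      (∀ n, ∃ y ∈ O0, a (n + 1) - a n = (p : F) ^ n * y) →
      ∃ L ∈ O0, ∀ n, ∃ y ∈ O0, L - a n = (p : F) ^ n * y)
    -- `𝒪_F` is a finitely generated `𝒪_0`-module:
    (hfg : ∃ s : Finset F, (↑s : Set F) ⊆ (OF : Set F) ∧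
      ∀ x ∈ OF, ∃ c : F → F, (∀ i ∈ s, c i ∈ O0) ∧ x = ∑ i ∈ s, c i * i)
    -- the inclusion `𝒪_0 ⊆ 𝒪_F` induces an isomorphism of residue fields:
    (hres_surj : ∀ x ∈ OF, ∃ a ∈ O0, ∃ y ∈ OF, x - a = pi * y)
    (hres_inj : ∀ a ∈ O0, (∃ y ∈ OF, a = pi * y) → ∃ b ∈ O0, a = (p : F) * b)
    -- the residue field is finite of cardinality `q`:
    (q : ℕ)
    (hq : ∃ s : Finset F, s.card = q ∧ (↑s : Set F) ⊆ (OF : Set F) ∧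
      (∀ x ∈ OF, ∃ a ∈ s, ∃ y ∈ OF, x - a = pi * y) ∧
      (∀ a ∈ s, ∀ b ∈ s, (∃ y ∈ OF, a - b = pi * y) → a = b))
    :
    -- there is an element of `𝒪_0` of multiplicative order exactly `q - 1`:
    (∃ z : F, z ∈ O0 ∧ z ^ (q - 1) = 1 ∧ ∀ j : ℕ, 0 < j → j < q - 1 → z ^ j ≠ 1) ∧
    -- for every such element and every `m ≥ 1`, each unit of `R_m` decomposes uniquely:
    (∀ z : F, z ∈ O0 → z ^ (q - 1) = 1 → (∀ j : ℕ, 0 < j → j < q - 1 → z ^ j ≠ 1) →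
      ∀ m : ℕ, 1 ≤ m → ∀ x : F, x ∈ RmSet O0 OF pi m →
        (∃ w ∈ RmSet O0 OF pi m, x * w = 1) →
        ∃! iu : ℕ × F, iu.1 < q - 1 ∧ iu.2 ∈ onePlusSet (mTildeSet p O0 OF pi m) ∧
          x = z ^ iu.1 * iu.2) :=
  stmt_2_general p F OF O0 hO0F pi hpimem hmax hpinotunit e he hram hO0dvr hO0complete hres_surj
    hres_inj q hq
end

section
/- Let m ≥ 1 be an integer, u ∈ 1 + 𝔪̃_m, and α ∈ ℤ_p. Then for every sequence (a_n) of natural numbers converging to α in ℤ_p, the sequence (u^{a_n}) converges in F, its limit lies in 1 + 𝔪̃_m, and this limit depends only on α and not on the chosen sequence (a_n). Consequently, setting u^α equal to this limit makes 1 + 𝔪̃_m into a ℤ_p-module under exponentiation. -/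
open Filter Topology

section Ultrametric

variable {F : Type*} [NormedField F] [IsUltrametricDist F]

theorem norm_le_one_of_norm_sub_one_le_one {v : F} (hv : ‖v - 1‖ ≤ 1) : ‖v‖ ≤ 1 := by
  simpa [hv] using IsUltrametricDist.norm_add_one_le_max_norm_one (v - 1)

theorem norm_pow_sub_pow_le {v w : F} (hv : ‖v‖ ≤ 1) (hw : ‖w‖ ≤ 1) (n : ℕ) :
    ‖v ^ n - w ^ n‖ ≤ ‖v - w‖ := by
  induction n with
  | zero => simp
  | succ n ih =>
    rw [show v ^ (n + 1) - w ^ (n + 1) = v ^ n * (v - w) + (v ^ n - w ^ n) * w by ring]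
    refine (IsUltrametricDist.norm_add_le_max _ _).trans (max_le ?_ ?_) <;> rw [norm_mul]
    · exact mul_le_of_le_one_left (norm_nonneg _) (norm_pow v n ▸ pow_le_one₀ (norm_nonneg _) hv)
    · exact (mul_le_of_le_one_right (norm_nonneg _) hw).trans ih

theorem norm_pow_sub_one_le {v : F} (hv : ‖v - 1‖ ≤ 1) (n : ℕ) : ‖v ^ n - 1‖ ≤ ‖v - 1‖ := by
  simpa using norm_pow_sub_pow_le (norm_le_one_of_norm_sub_one_le_one hv) norm_one.le n

/-- `v ^ n - 1 = (v - 1) * ∑_{i < n} v ^ i`, and the sum is `n` plus terms of norm `≤ ‖v - 1‖`. -/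
theorem norm_pow_sub_one_le_mul {v : F} {c : ℝ} (n : ℕ) (hn : ‖(n : F)‖ ≤ c) (hv : ‖v - 1‖ ≤ c)
    (hc : c ≤ 1) : ‖v ^ n - 1‖ ≤ c * ‖v - 1‖ := by
  have hgeom : ‖∑ i ∈ Finset.range n, v ^ i‖ ≤ c := by
    have : ∑ i ∈ Finset.range n, v ^ i = ∑ i ∈ Finset.range n, (v ^ i - 1) + n := by
      simp [Finset.sum_sub_distrib]
    rw [this]
    refine (IsUltrametricDist.norm_add_le_max _ _).trans (max_le ?_ hn)
    exact IsUltrametricDist.norm_sum_le_of_forall_le_of_nonneg ((norm_nonneg _).trans hv)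
      fun i _ => (norm_pow_sub_one_le (hv.trans hc) i).trans hv
  rw [← geom_sum_mul, norm_mul]
  exact mul_le_mul_of_nonneg_right hgeom (norm_nonneg _)

theorem norm_pow_pow_sub_one_le {v : F} {c : ℝ} (p k : ℕ) (hp : ‖(p : F)‖ ≤ c) (hv : ‖v - 1‖ ≤ c)
    (hc : c ≤ 1) : ‖v ^ p ^ k - 1‖ ≤ c ^ k * ‖v - 1‖ := by
  have hc0 : 0 ≤ c := (norm_nonneg _).trans hv
  induction k with
  | zero => simp
  | succ k ih =>
    have hk : ‖v ^ p ^ k - 1‖ ≤ c :=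
      ih.trans ((mul_le_of_le_one_left (norm_nonneg _) (pow_le_one₀ hc0 hc)).trans hv)
    calc ‖v ^ p ^ (k + 1) - 1‖ = ‖(v ^ p ^ k) ^ p - 1‖ := by rw [pow_succ, pow_mul]
      _ ≤ c * ‖v ^ p ^ k - 1‖ := norm_pow_sub_one_le_mul p hp hk hc
      _ ≤ c * (c ^ k * ‖v - 1‖) := mul_le_mul_of_nonneg_left ih hc0
      _ = c ^ (k + 1) * ‖v - 1‖ := by ring

theorem norm_pow_sub_pow_le_of_dvd {v : F} {c : ℝ} {p k a b : ℕ} (hp : ‖(p : F)‖ ≤ c)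
    (hv : ‖v - 1‖ ≤ c) (hc : c ≤ 1) (hab : (p ^ k : ℤ) ∣ a - b) : ‖v ^ a - v ^ b‖ ≤ c ^ k := by
  wlog hba : b ≤ a generalizing a b
  · rw [norm_sub_rev]
    exact this (dvd_sub_comm.mp hab) (by omega)
  obtain ⟨t, ht⟩ : p ^ k ∣ a - b := Int.natCast_dvd_natCast.mp (by push_cast [hba]; exact hab)
  obtain rfl : a = b + p ^ k * t := by omega
  have hc0 : 0 ≤ c := (norm_nonneg _).trans hv
  have hv1 : ‖v‖ ≤ 1 := norm_le_one_of_norm_sub_one_le_one (hv.trans hc)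
  calc ‖v ^ (b + p ^ k * t) - v ^ b‖ = ‖v ^ b‖ * ‖(v ^ p ^ k) ^ t - 1 ^ t‖ := by
        rw [← norm_mul, pow_add, pow_mul, one_pow, mul_sub, mul_one]
    _ ≤ 1 * ‖v ^ p ^ k - 1‖ := by
        gcongr
        · exact norm_pow v b ▸ pow_le_one₀ (norm_nonneg _) hv1
        · exact norm_pow_sub_pow_le (norm_pow v _ ▸ pow_le_one₀ (norm_nonneg _) hv1) norm_one.le t
    _ ≤ c ^ k * ‖v - 1‖ := by rw [one_mul]; exact norm_pow_pow_sub_one_le p k hp hv hc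
    _ ≤ c ^ k := mul_le_of_le_one_right (by positivity) (hv.trans hc)


theorem norm_mul_sub_one_lt_one {v w : F} (hv : ‖v - 1‖ < 1) (hw : ‖w - 1‖ < 1) :
    ‖v * w - 1‖ < 1 := by
  rw [show v * w - 1 = v * (w - 1) + (v - 1) by ring]
  refine (IsUltrametricDist.norm_add_le_max _ _).trans_lt (max_lt ?_ hv)
  rw [norm_mul]
  exact mul_lt_one_of_nonneg_of_lt_one_right (norm_le_one_of_norm_sub_one_le_one hv.le)
    (norm_nonneg _) hw

variable {p : ℕ} [Fact p.Prime]

theorem exists_dist_pow_lt {v : F} (hp : ‖(p : F)‖ < 1) (hv : ‖v - 1‖ < 1) {ε : ℝ} (hε : 0 < ε) :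
    ∃ δ > 0, ∀ a b : ℕ, dist (a : ℤ_[p]) b < δ → dist (v ^ a) (v ^ b) < ε := by
  have hc : max ‖(p : F)‖ ‖v - 1‖ < 1 := max_lt hp hv
  obtain ⟨k, hk⟩ := exists_pow_lt_of_lt_one hε hc
  have hp0 : (0 : ℝ) < p := by exact_mod_cast (Fact.out : p.Prime).pos
  refine ⟨(p : ℝ) ^ (-(k : ℤ)), zpow_pos hp0 _, fun a b hab => ?_⟩
  rw [dist_eq_norm] at hab ⊢
  have hdvd : (p ^ k : ℤ) ∣ a - b :=
    PadicInt.norm_int_le_pow_iff_dvd.mp (by push_cast; exact hab.le)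
  exact (norm_pow_sub_pow_le_of_dvd (le_max_left _ _) (le_max_right _ _) hc.le hdvd).trans_lt hk

instance PadicInt.comap_natCast_nhds_neBot (α : ℤ_[p]) :
    NeBot (comap ((↑) : ℕ → ℤ_[p]) (𝓝 α)) :=
  comap_neBot fun _ ht => PadicInt.denseRange_natCast.mem_nhds ht

theorem PadicInt.exists_tendsto_natCast (α : ℤ_[p]) :
    ∃ a : ℕ → ℕ, Tendsto (fun n => (a n : ℤ_[p])) atTop (𝓝 α) := by
  obtain ⟨a, ha⟩ := (comap ((↑) : ℕ → ℤ_[p]) (𝓝 α)).exists_seq_tendsto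
  exact ⟨a, tendsto_comap_iff.mp ha⟩

noncomputable def padicPow (v : F) (α : ℤ_[p]) : F :=
  limUnder (comap ((↑) : ℕ → ℤ_[p]) (𝓝 α)) (v ^ ·)

variable [CompleteSpace F] {v w : F}

theorem tendsto_padicPow (hp : ‖(p : F)‖ < 1) (hv : ‖v - 1‖ < 1) (α : ℤ_[p]) :
    Tendsto (v ^ ·) (comap ((↑) : ℕ → ℤ_[p]) (𝓝 α)) (𝓝 (padicPow v α)) := by
  have hcauchy : Cauchy (map (v ^ ·) (comap ((↑) : ℕ → ℤ_[p]) (𝓝 α))) := by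
    refine Metric.cauchy_iff.mpr ⟨inferInstance, fun ε hε => ?_⟩
    obtain ⟨δ, hδ, hclose⟩ := exists_dist_pow_lt hp hv hε
    have hball : ((↑) : ℕ → ℤ_[p]) ⁻¹' Metric.ball α (δ / 2) ∈ comap ((↑) : ℕ → ℤ_[p]) (𝓝 α) :=
      preimage_mem_comap (Metric.ball_mem_nhds _ (half_pos hδ))
    refine ⟨(v ^ ·) '' _, image_mem_map hball, ?_⟩
    rintro _ ⟨a, ha, rfl⟩ _ ⟨b, hb, rfl⟩
    rw [Set.mem_preimage, Metric.mem_ball] at ha hb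
    exact hclose a b ((dist_triangle_right _ _ α).trans_lt (by linarith))
  obtain ⟨L, hL⟩ := CompleteSpace.complete hcauchy
  exact tendsto_nhds_limUnder ⟨L, hL⟩

theorem tendsto_pow_padicPow (hp : ‖(p : F)‖ < 1) (hv : ‖v - 1‖ < 1) {α : ℤ_[p]} {a : ℕ → ℕ}
    (ha : Tendsto (fun n => (a n : ℤ_[p])) atTop (𝓝 α)) :
    Tendsto (fun n => v ^ a n) atTop (𝓝 (padicPow v α)) :=
  (tendsto_padicPow hp hv α).comp (tendsto_comap_iff.mpr ha)

theorem padicPow_natCast (hp : ‖(p : F)‖ < 1) (hv : ‖v - 1‖ < 1) (n : ℕ) :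
    padicPow v (n : ℤ_[p]) = v ^ n :=
  tendsto_nhds_unique (tendsto_pow_padicPow hp hv tendsto_const_nhds) tendsto_const_nhds

theorem padicPow_one (hp : ‖(p : F)‖ < 1) (hv : ‖v - 1‖ < 1) : padicPow v (1 : ℤ_[p]) = v := by
  simpa using padicPow_natCast (p := p) hp hv 1

theorem padicPow_add (hp : ‖(p : F)‖ < 1) (hv : ‖v - 1‖ < 1) (α β : ℤ_[p]) :
    padicPow v (α + β) = padicPow v α * padicPow v β := by
  obtain ⟨a, ha⟩ := PadicInt.exists_tendsto_natCast α
  obtain ⟨b, hb⟩ := PadicInt.exists_tendsto_natCast β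
  refine tendsto_nhds_unique (tendsto_pow_padicPow hp hv (a := a + b) (by simpa using ha.add hb)) ?_
  simpa [pow_add] using (tendsto_pow_padicPow hp hv ha).mul (tendsto_pow_padicPow hp hv hb)

theorem mul_padicPow (hp : ‖(p : F)‖ < 1) (hv : ‖v - 1‖ < 1) (hw : ‖w - 1‖ < 1) (α : ℤ_[p]) :
    padicPow (v * w) α = padicPow v α * padicPow w α := by
  obtain ⟨a, ha⟩ := PadicInt.exists_tendsto_natCast α
  refine tendsto_nhds_unique (tendsto_pow_padicPow hp (norm_mul_sub_one_lt_one hv hw) ha) ?_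
  simpa [mul_pow] using (tendsto_pow_padicPow hp hv ha).mul (tendsto_pow_padicPow hp hw ha)

theorem norm_padicPow_sub_one_le (hp : ‖(p : F)‖ < 1) (hv : ‖v - 1‖ < 1) (α : ℤ_[p]) :
    ‖padicPow v α - 1‖ ≤ ‖v - 1‖ := by
  obtain ⟨a, ha⟩ := PadicInt.exists_tendsto_natCast α
  exact le_of_tendsto ((tendsto_pow_padicPow hp hv ha).sub_const 1).norm
    (Eventually.of_forall fun n => norm_pow_sub_one_le hv.le (a n))

theorem padicPow_mul (hp : ‖(p : F)‖ < 1) (hv : ‖v - 1‖ < 1) (α β : ℤ_[p]) :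
    padicPow v (α * β) = padicPow (padicPow v α) β := by
  obtain ⟨a, ha⟩ := PadicInt.exists_tendsto_natCast α
  obtain ⟨b, hb⟩ := PadicInt.exists_tendsto_natCast β
  set V := padicPow v α
  have hV : ‖V - 1‖ < 1 := (norm_padicPow_sub_one_le hp hv α).trans_lt hv
  have hpow : Tendsto (fun n => (v ^ a n) ^ b n - V ^ b n) atTop (𝓝 0) := by
    refine squeeze_zero_norm (fun n => norm_pow_sub_pow_le ?_ (norm_le_one_of_norm_sub_one_le_one
      hV.le) (b n)) (tendsto_iff_norm_sub_tendsto_zero.mp (tendsto_pow_padicPow hp hv ha))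
    exact norm_le_one_of_norm_sub_one_le_one ((norm_pow_sub_one_le hv.le _).trans hv.le)
  refine tendsto_nhds_unique (tendsto_pow_padicPow hp hv (a := fun n => a n * b n)
    (by simpa using ha.mul hb)) ?_
  simpa [pow_mul] using hpow.add (tendsto_pow_padicPow hp hV hb)

theorem padicPow_mem (hp : ‖(p : F)‖ < 1) (hv : ‖v - 1‖ < 1) {M : Submonoid F}
    (hM : IsClosed (M : Set F)) (hvM : v ∈ M) (α : ℤ_[p]) : padicPow v α ∈ M := by
  obtain ⟨a, ha⟩ := PadicInt.exists_tendsto_natCast α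
  exact hM.mem_of_tendsto (tendsto_pow_padicPow hp hv ha)
    (Eventually.of_forall fun n => pow_mem hvM (a n))

end Ultrametric

section PrincipalUnits

def NonUnitalSubring.onePlus {R : Type*} [Ring R] (S : NonUnitalSubring R) : Submonoid R where
  carrier := {u | u - 1 ∈ S}
  one_mem' := by simp
  mul_mem' {v w} hv hw := by
    rw [Set.mem_ofPred_eq, show v * w - 1 = (v - 1) * (w - 1) + (v - 1) + (w - 1) by noncomm_ring]
    exact add_mem (add_mem (mul_mem hv hw) hv) hw

section Field

variable {F : Type} [Field F]

def mTildeAddSubgroup (p : ℕ) (O0 OF : Subring F) (pi : F) (m : ℕ) : AddSubgroup F where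
  carrier := mTildeSet p O0 OF pi m
  zero_mem' := ⟨0, O0.zero_mem, 0, OF.zero_mem, by simp⟩
  add_mem' := by
    rintro _ _ ⟨a, ha, b, hb, rfl⟩ ⟨a', ha', b', hb', rfl⟩
    exact ⟨a + a', add_mem ha ha', b + b', add_mem hb hb', by ring⟩
  neg_mem' := by
    rintro _ ⟨a, ha, b, hb, rfl⟩
    exact ⟨-a, neg_mem ha, -b, neg_mem hb, by ring⟩

def mTildeNonUnitalSubring {O0 OF : Subring F} {pi : F} (p : ℕ) (hO0F : O0 ≤ OF) (hpi : pi ∈ OF)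
    (m : ℕ) : NonUnitalSubring F :=
  { mTildeAddSubgroup p O0 OF pi m with
    mul_mem' := by
      rintro _ _ ⟨a, ha, b, hb, rfl⟩ ⟨a', ha', b', hb', rfl⟩
      refine ⟨p * a * a', mul_mem (mul_mem (natCast_mem O0 p) ha) ha',
        p * a * b' + p * b * a' + pi ^ m * b * b', ?_, by ring⟩
      have hp : (p : F) ∈ OF := natCast_mem OF p
      have hpim : pi ^ m ∈ OF := pow_mem hpi m
      exact add_mem (add_mem (mul_mem (mul_mem hp (hO0F ha)) hb')
        (mul_mem (mul_mem hp hb) (hO0F ha'))) (mul_mem (mul_mem hpim hb) hb') }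

end Field

variable {F : Type} [NormedField F] {p : ℕ} {O0 OF : Subring F} {pi : F} {m : ℕ}

theorem norm_lt_one_of_mem_mTildeSet [IsUltrametricDist F] (hOF : ∀ x : F, x ∈ OF ↔ ‖x‖ ≤ 1)
    (hO0F : O0 ≤ OF) (hp : ‖(p : F)‖ < 1) (hpi : ‖pi‖ < 1) (hm : m ≠ 0) {x : F}
    (hx : x ∈ mTildeSet p O0 OF pi m) : ‖x‖ < 1 := by
  obtain ⟨a, ha, b, hb, rfl⟩ := hx
  refine (IsUltrametricDist.norm_add_le_max _ _).trans_lt (max_lt ?_ ?_) <;> rw [norm_mul]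
  · exact mul_lt_one_of_nonneg_of_lt_one_left (norm_nonneg _) hp ((hOF a).mp (hO0F ha))
  · exact mul_lt_one_of_nonneg_of_lt_one_left (norm_nonneg _)
      (norm_pow pi m ▸ pow_lt_one₀ (norm_nonneg _) hpi hm) ((hOF b).mp hb)

/-- An additive subgroup containing a ball around `0` is open, hence closed. -/
theorem isClosed_mTildeSet (hOF : ∀ x : F, x ∈ OF ↔ ‖x‖ ≤ 1) (hpi0 : pi ≠ 0) :
    IsClosed (mTildeSet p O0 OF pi m) := by
  have hpim : 0 < ‖pi ^ m‖ := norm_pos_iff.mpr (pow_ne_zero m hpi0)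
  have hball : Metric.closedBall 0 ‖pi ^ m‖ ⊆ mTildeSet p O0 OF pi m := fun x hx =>
    ⟨0, O0.zero_mem, x / pi ^ m, (hOF _).mpr (by
      rw [norm_div, div_le_one hpim]; simpa using hx), by field_simp [pow_ne_zero m hpi0]; ring⟩
  exact (mTildeAddSubgroup p O0 OF pi m).isClosed_of_isOpen <| AddSubgroup.isOpen_of_mem_nhds _ <|
    mem_of_superset (Metric.closedBall_mem_nhds 0 hpim) hball

end PrincipalUnits

theorem stmt_7_general
    (p : ℕ) [hp : Fact (Nat.Prime p)]
    (F : Type) [NormedField F] [CompleteSpace F]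
    -- the norm of `F` is nonarchimedean (an ultrametric absolute value):
    (hultra : ∀ x y : F, ‖x + y‖ ≤ max ‖x‖ ‖y‖)
    (OF O0 : Subring F) (hO0F : O0 ≤ OF)
    -- `𝒪_F` is the ring of integers of `F`, i.e. its closed unit ball:
    (hOF : ∀ x : F, x ∈ OF ↔ ‖x‖ ≤ 1)
    (pi : F) (hpimem : pi ∈ OF) (hpi0 : pi ≠ 0) (hpilt : ‖pi‖ < 1)
    -- the norm extends the `p`-adic absolute value:
    (hpnorm : ‖(p : F)‖ = (p : ℝ)⁻¹)
    (m : ℕ) (hm : 1 ≤ m)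
    (u : F) (hu : u ∈ onePlusSet (mTildeSet p O0 OF pi m)) (al : ℤ_[p]) :
    -- there is a limit `L ∈ 1 + 𝔪̃_m`, independent of the chosen sequence, such that
    -- `u ^ (a n) → L` for every sequence of naturals `a` converging to `α` in `ℤ_p`:
    (∃ L ∈ onePlusSet (mTildeSet p O0 OF pi m),
      ∀ a : ℕ → ℕ, Filter.Tendsto (fun n => ((a n : ℤ_[p]))) Filter.atTop (nhds al) →
        Filter.Tendsto (fun n => u ^ a n) Filter.atTop (nhds L)) ∧
    -- consequently, this exponentiation makes `1 + 𝔪̃_m` a `ℤ_p`-module: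
    (∃ f : F → ℤ_[p] → F,
      (∀ v ∈ onePlusSet (mTildeSet p O0 OF pi m), ∀ b : ℤ_[p],
        f v b ∈ onePlusSet (mTildeSet p O0 OF pi m)) ∧
      (∀ v ∈ onePlusSet (mTildeSet p O0 OF pi m), ∀ b : ℤ_[p], ∀ a : ℕ → ℕ,
        Filter.Tendsto (fun n => ((a n : ℤ_[p]))) Filter.atTop (nhds b) →
        Filter.Tendsto (fun n => v ^ a n) Filter.atTop (nhds (f v b))) ∧
      (∀ v ∈ onePlusSet (mTildeSet p O0 OF pi m), ∀ b c : ℤ_[p],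
        f v (b + c) = f v b * f v c) ∧
      (∀ v ∈ onePlusSet (mTildeSet p O0 OF pi m),
        ∀ w ∈ onePlusSet (mTildeSet p O0 OF pi m), ∀ b : ℤ_[p],
        f (v * w) b = f v b * f w b) ∧
      (∀ v ∈ onePlusSet (mTildeSet p O0 OF pi m), ∀ b c : ℤ_[p],
        f v (b * c) = f (f v b) c) ∧
      (∀ v ∈ onePlusSet (mTildeSet p O0 OF pi m), f v 1 = v)) := by
  have := IsUltrametricDist.isUltrametricDist_of_forall_norm_add_le_max_norm hultra
  have hpF : ‖(p : F)‖ < 1 := hpnorm ▸ inv_lt_one_of_one_lt₀ (by exact_mod_cast hp.out.one_lt)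
  set T := (mTildeNonUnitalSubring p hO0F hpimem m).onePlus
  have hTclosed : IsClosed (T : Set F) :=
    (isClosed_mTildeSet hOF hpi0).preimage (continuous_sub_right 1)
  have hT (v : F) (hv : v ∈ T) : ‖v - 1‖ < 1 :=
    norm_lt_one_of_mem_mTildeSet hOF hO0F hpF hpilt (by omega) hv
  refine ⟨⟨padicPow u al, padicPow_mem hpF (hT u hu) hTclosed hu al,
      fun a ha => tendsto_pow_padicPow hpF (hT u hu) ha⟩,
    padicPow, fun v hv => padicPow_mem hpF (hT v hv) hTclosed hv,
    fun v hv _ _ => tendsto_pow_padicPow hpF (hT v hv),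
    fun v hv => padicPow_add hpF (hT v hv),
    fun v hv w hw => mul_padicPow hpF (hT v hv) (hT w hw),
    fun v hv => padicPow_mul hpF (hT v hv),
    fun v hv => padicPow_one hpF (hT v hv)⟩

theorem stmt_7
    (p : ℕ) [hp : Fact (Nat.Prime p)]
    (F : Type) [NormedField F] [CompleteSpace F]
    -- the norm of `F` is nonarchimedean (an ultrametric absolute value):
    (hultra : ∀ x y : F, ‖x + y‖ ≤ max ‖x‖ ‖y‖)
    (OF O0 : Subring F) (hO0F : O0 ≤ OF)
    -- `𝒪_F` is the ring of integers of `F`, i.e. its closed unit ball: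
    (hOF : ∀ x : F, x ∈ OF ↔ ‖x‖ ≤ 1)
    (pi : F) (hpimem : pi ∈ OF) (hpi0 : pi ≠ 0) (hpilt : ‖pi‖ < 1)
    -- `𝔪 = π 𝒪_F` is the maximal ideal of `𝒪_F`:
    (hmax : ∀ x ∈ OF, (¬ ∃ y ∈ OF, x = pi * y) → ∃ z ∈ OF, x * z = 1)
    -- the norm extends the `p`-adic absolute value:
    (hpnorm : ‖(p : F)‖ = (p : ℝ)⁻¹)
    -- the absolute ramification index `e`, i.e. `p 𝒪_F = 𝔪^e`:
    (e : ℕ) (he : 1 ≤ e)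
    (hram : ∃ u ∈ OF, (∃ w ∈ OF, u * w = 1) ∧ (p : F) = pi ^ e * u)
    -- `𝒪_0` is a complete discrete valuation ring with maximal ideal `p 𝒪_0`,
    -- closed in `F`:
    (hO0dvr : ∀ x ∈ O0, x ≠ (0 : F) →
      ∃ n : ℕ, ∃ u ∈ O0, (∃ w ∈ O0, u * w = 1) ∧ x = (p : F) ^ n * u)
    (hO0closed : IsClosed (O0 : Set F))
    -- `𝒪_F` is a finitely generated `𝒪_0`-module:
    (hfg : ∃ s : Finset F, (↑s : Set F) ⊆ (OF : Set F) ∧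
      ∀ x ∈ OF, ∃ c : F → F, (∀ i ∈ s, c i ∈ O0) ∧ x = ∑ i ∈ s, c i * i)
    -- the inclusion `𝒪_0 ⊆ 𝒪_F` induces an isomorphism of residue fields:
    (hres_surj : ∀ x ∈ OF, ∃ a ∈ O0, ∃ y ∈ OF, x - a = pi * y)
    (hres_inj : ∀ a ∈ O0, (∃ y ∈ OF, a = pi * y) → ∃ b ∈ O0, a = (p : F) * b)
    -- the residue field is finite of cardinality `q`:
    (q : ℕ)
    (hq : ∃ s : Finset F, s.card = q ∧ (↑s : Set F) ⊆ (OF : Set F) ∧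
      (∀ x ∈ OF, ∃ a ∈ s, ∃ y ∈ OF, x - a = pi * y) ∧
      (∀ a ∈ s, ∀ b ∈ s, (∃ y ∈ OF, a - b = pi * y) → a = b))
    (m : ℕ) (hm : 1 ≤ m)
    (u : F) (hu : u ∈ onePlusSet (mTildeSet p O0 OF pi m)) (al : ℤ_[p]) :
    -- there is a limit `L ∈ 1 + 𝔪̃_m`, independent of the chosen sequence, such that
    -- `u ^ (a n) → L` for every sequence of naturals `a` converging to `α` in `ℤ_p`:
    (∃ L ∈ onePlusSet (mTildeSet p O0 OF pi m),
      ∀ a : ℕ → ℕ, Filter.Tendsto (fun n => ((a n : ℤ_[p]))) Filter.atTop (nhds al) →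
        Filter.Tendsto (fun n => u ^ a n) Filter.atTop (nhds L)) ∧
    -- consequently, this exponentiation makes `1 + 𝔪̃_m` a `ℤ_p`-module:
    (∃ f : F → ℤ_[p] → F,
      (∀ v ∈ onePlusSet (mTildeSet p O0 OF pi m), ∀ b : ℤ_[p],
        f v b ∈ onePlusSet (mTildeSet p O0 OF pi m)) ∧
      (∀ v ∈ onePlusSet (mTildeSet p O0 OF pi m), ∀ b : ℤ_[p], ∀ a : ℕ → ℕ,
        Filter.Tendsto (fun n => ((a n : ℤ_[p]))) Filter.atTop (nhds b) →
        Filter.Tendsto (fun n => v ^ a n) Filter.atTop (nhds (f v b))) ∧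
      (∀ v ∈ onePlusSet (mTildeSet p O0 OF pi m), ∀ b c : ℤ_[p],
        f v (b + c) = f v b * f v c) ∧
      (∀ v ∈ onePlusSet (mTildeSet p O0 OF pi m),
        ∀ w ∈ onePlusSet (mTildeSet p O0 OF pi m), ∀ b : ℤ_[p],
        f (v * w) b = f v b * f w b) ∧
      (∀ v ∈ onePlusSet (mTildeSet p O0 OF pi m), ∀ b c : ℤ_[p],
        f v (b * c) = f (f v b) c) ∧
      (∀ v ∈ onePlusSet (mTildeSet p O0 OF pi m), f v 1 = v)) :=
  stmt_7_general p (hp := hp) F hultra OF O0 hO0F hOF pi hpimem hpi0 hpilt hpnorm m hm u hu al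
end

section
/- Let m ≥ 1 be an integer. Every element u ∈ 1 + 𝔪̃_m can be factored as u = (1 − p·x)·β, where x ∈ 𝒪_0 and β is a unit of 𝒪_F with β − 1 ∈ 𝔪^m (i.e., β ∈ U_F^m). -/
section PrincipalUnits

variable {F : Type} [Field F] {OF : Subring F} {pi : F}

theorem exists_mul_one_add_pi_mul_eq_one (hpimem : pi ∈ OF)
    (hmax : ∀ x ∈ OF, (¬ ∃ y ∈ OF, x = pi * y) → ∃ z ∈ OF, x * z = 1)
    (hpinotunit : ¬ ∃ z ∈ OF, pi * z = 1) {c : F} (hc : c ∈ OF) :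
    ∃ z ∈ OF, (1 + pi * c) * z = 1 := by
  refine hmax _ (OF.add_mem OF.one_mem (OF.mul_mem hpimem hc)) ?_
  rintro ⟨y, hy, hxy⟩
  exact hpinotunit ⟨y - c, OF.sub_mem hy hc, by linear_combination -hxy⟩

theorem exists_mul_one_add_pi_pow_mul_eq_one (hpimem : pi ∈ OF)
    (hmax : ∀ x ∈ OF, (¬ ∃ y ∈ OF, x = pi * y) → ∃ z ∈ OF, x * z = 1)
    (hpinotunit : ¬ ∃ z ∈ OF, pi * z = 1) {n : ℕ} (hn : 1 ≤ n) {c : F} (hc : c ∈ OF) :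
    ∃ z ∈ OF, (1 + pi ^ n * c) * z = 1 := by
  obtain ⟨k, rfl⟩ := Nat.exists_eq_add_of_le' hn
  have hpow : pi ^ (k + 1) * c = pi * (pi ^ k * c) := by ring
  rw [hpow]
  exact exists_mul_one_add_pi_mul_eq_one hpimem hmax hpinotunit
    (OF.mul_mem (OF.pow_mem hpimem k) hc)

end PrincipalUnits

theorem stmt_9_general
    (p : ℕ)
    (F : Type) [Field F]
    (OF O0 : Subring F) (hO0F : O0 ≤ OF)
    (pi : F) (hpimem : pi ∈ OF)
    -- `𝔪 = π 𝒪_F` is the maximal ideal of `𝒪_F`: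
    (hmax : ∀ x ∈ OF, (¬ ∃ y ∈ OF, x = pi * y) → ∃ z ∈ OF, x * z = 1)
    (hpinotunit : ¬ ∃ z ∈ OF, pi * z = 1)
    -- the absolute ramification index `e`, i.e. `p 𝒪_F = 𝔪^e`:
    (e : ℕ) (he : 1 ≤ e)
    (hram : ∃ u ∈ OF, (∃ w ∈ OF, u * w = 1) ∧ (p : F) = pi ^ e * u)
    (m : ℕ) (hm : 1 ≤ m) :
    ∀ u ∈ onePlusSet (mTildeSet p O0 OF pi m),
      ∃ x ∈ O0, ∃ beta : F, beta ∈ OF ∧ (∃ g ∈ OF, beta * g = 1) ∧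
        (∃ y ∈ OF, beta - 1 = pi ^ m * y) ∧ u = (1 - (p : F) * x) * beta := by
  rintro u ⟨a, ha, b, hb, hab⟩
  obtain ⟨w, hw, -, hpw⟩ := hram
  obtain ⟨z, hz, hzinv⟩ := exists_mul_one_add_pi_pow_mul_eq_one hpimem hmax hpinotunit he
    (OF.mul_mem hw (hO0F ha))
  have hpa_inv : (1 + (p : F) * a) * z = 1 := by rw [hpw, mul_assoc]; exact hzinv
  have hbz : b * z ∈ OF := OF.mul_mem hb hz
  have hbeta : u * z = 1 + pi ^ m * (b * z) := by linear_combination z * hab + hpa_inv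
  obtain ⟨g, hg, hbeta_inv⟩ := exists_mul_one_add_pi_pow_mul_eq_one hpimem hmax hpinotunit hm hbz
  refine ⟨-a, O0.neg_mem ha, u * z, ?_, ⟨g, hg, hbeta ▸ hbeta_inv⟩,
    ⟨b * z, hbz, by linear_combination hbeta⟩, by linear_combination -u * hpa_inv⟩
  rw [hbeta]
  exact OF.add_mem OF.one_mem (OF.mul_mem (OF.pow_mem hpimem m) hbz)

theorem stmt_9
    (p : ℕ) (hp : Nat.Prime p)
    (F : Type) [Field F]
    (OF O0 : Subring F) (hO0F : O0 ≤ OF)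
    (pi : F) (hpimem : pi ∈ OF) (hpi0 : pi ≠ 0)
    -- `𝒪_F` is the valuation ring of `F`:
    (hval : ∀ x : F, x ≠ 0 → x ∈ OF ∨ x⁻¹ ∈ OF)
    -- `𝔪 = π 𝒪_F` is the maximal ideal of `𝒪_F`:
    (hmax : ∀ x ∈ OF, (¬ ∃ y ∈ OF, x = pi * y) → ∃ z ∈ OF, x * z = 1)
    (hpinotunit : ¬ ∃ z ∈ OF, pi * z = 1)
    -- the absolute ramification index `e`, i.e. `p 𝒪_F = 𝔪^e`:
    (e : ℕ) (he : 1 ≤ e)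
    (hram : ∃ u ∈ OF, (∃ w ∈ OF, u * w = 1) ∧ (p : F) = pi ^ e * u)
    -- `𝒪_0` is a complete discrete valuation ring with maximal ideal `p 𝒪_0`:
    (hO0dvr : ∀ x ∈ O0, x ≠ (0 : F) →
      ∃ n : ℕ, ∃ u ∈ O0, (∃ w ∈ O0, u * w = 1) ∧ x = (p : F) ^ n * u)
    (hO0complete : ∀ a : ℕ → F, (∀ n, a n ∈ O0) →
      (∀ n, ∃ y ∈ O0, a (n + 1) - a n = (p : F) ^ n * y) →
      ∃ L ∈ O0, ∀ n, ∃ y ∈ O0, L - a n = (p : F) ^ n * y)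
    -- `𝒪_F` is a finitely generated `𝒪_0`-module:
    (hfg : ∃ s : Finset F, (↑s : Set F) ⊆ (OF : Set F) ∧
      ∀ x ∈ OF, ∃ c : F → F, (∀ i ∈ s, c i ∈ O0) ∧ x = ∑ i ∈ s, c i * i)
    -- the inclusion `𝒪_0 ⊆ 𝒪_F` induces an isomorphism of residue fields:
    (hres_surj : ∀ x ∈ OF, ∃ a ∈ O0, ∃ y ∈ OF, x - a = pi * y)
    (hres_inj : ∀ a ∈ O0, (∃ y ∈ OF, a = pi * y) → ∃ b ∈ O0, a = (p : F) * b)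
    -- the residue field is finite of cardinality `q`:
    (q : ℕ)
    (hq : ∃ s : Finset F, s.card = q ∧ (↑s : Set F) ⊆ (OF : Set F) ∧
      (∀ x ∈ OF, ∃ a ∈ s, ∃ y ∈ OF, x - a = pi * y) ∧
      (∀ a ∈ s, ∀ b ∈ s, (∃ y ∈ OF, a - b = pi * y) → a = b))
    (m : ℕ) (hm : 1 ≤ m) :
    ∀ u ∈ onePlusSet (mTildeSet p O0 OF pi m),
      ∃ x ∈ O0, ∃ beta : F, beta ∈ OF ∧ (∃ g ∈ OF, beta * g = 1) ∧
        (∃ y ∈ OF, beta - 1 = pi ^ m * y) ∧ u = (1 - (p : F) * x) * beta :=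
  stmt_9_general p F OF O0 hO0F pi hpimem hmax hpinotunit e he hram m hm
end

section
/- Let c : F^× × F^× → A be a Steinberg symbol. Then for all x, y ∈ F^× there exist units u_0, u, w ∈ 𝒪^× of the valuation ring such that c(x, y) = c(π, u_0) · c(u, w). -/
/-!
Extend `c` to a bimultiplicative map `B` on `Fˣ`. The Steinberg relation gives `B a (-a) = 1`,
and hence skew-symmetry `B a b * B b a = 1`. Writing `x = π ^ m * u` and `y = π ^ n * w` with
units `u`, `w` of `𝒪`, `B x y = B π π ^ (m n) * B π w ^ m * B u π ^ n * B u w`, and the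
identities `B π π = B π (-1)⁻¹`, `B u π = (B π u)⁻¹` fold the first three factors into
`B π ((-1) ^ (-(m n)) * w ^ m * u ^ (-n))`.
-/

theorem Submonoid.mem_and_exists_mul_eq_one_iff {M : Type*} [CommMonoid M] (S : Submonoid M)
    (a : M) : (a ∈ S ∧ ∃ z ∈ S, a * z = 1) ↔ ∃ v ∈ S.units, (v : M) = a := by
  constructor
  · rintro ⟨ha, z, hz, haz⟩
    exact ⟨⟨a, z, haz, mul_comm a z ▸ haz⟩, ⟨ha, hz⟩, rfl⟩
  · rintro ⟨v, hv, rfl⟩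
    exact ⟨hv.1, _, hv.2, v.mul_inv⟩

namespace SteinbergSymbol

variable {F A : Type*} [Field F] [CommGroup A]

theorem exists_add_eq_one {a : Fˣ} (ha : a ≠ 1) : ∃ b : Fˣ, (a : F) + b = 1 :=
  ⟨Units.mk0 (1 - a) (sub_ne_zero.2 (Ne.symm (mt Units.val_eq_one.1 ha))), add_sub_cancel _ _⟩

section Bimultiplicative

variable {B : Fˣ →* Fˣ →* A} (hB : ∀ a b : Fˣ, (a : F) + b = 1 → B a b = 1)
include hB

theorem apply_neg_self (a : Fˣ) : B a (-a) = 1 := by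
  by_cases ha : a = 1
  · simp [ha]
  obtain ⟨b, hb⟩ := exists_add_eq_one ha
  obtain ⟨b', hb'⟩ := exists_add_eq_one (inv_ne_one.2 ha)
  -- `-a = (1 - a) / (1 - a⁻¹)`
  have hneg : -a = b * b'⁻¹ := by
    rw [Units.val_inv_eq_inv_val] at hb'
    rw [eq_mul_inv_iff_mul_eq, Units.ext_iff]
    push_cast
    linear_combination (-(a : F)) * hb' - hb + mul_inv_cancel₀ a.ne_zero
  calc B a (-a) = B a b * B a⁻¹ b' := by
        rw [hneg, map_mul, map_inv, map_inv, MonoidHom.inv_apply]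
    _ = 1 := by rw [hB _ _ hb, hB _ _ hb', mul_one]

theorem apply_mul_apply_swap (a b : Fˣ) : B a b * B b a = 1 :=
  calc B a b * B b a = B a (-a * b) * B b (a * -b) := by
        simp only [map_mul, apply_neg_self hB, one_mul, mul_one]
    _ = B (a * b) (-(a * b)) := by
        simp only [neg_mul, mul_neg, map_mul, MonoidHom.mul_apply]
    _ = 1 := apply_neg_self hB _

theorem apply_zpow_self (a : Fˣ) (k : ℤ) : B a (a ^ k) = B a ((-1) ^ (-k)) := by
  have h : B a ((-a) ^ k) = 1 := by rw [map_zpow, apply_neg_self hB, one_zpow]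
  rw [neg_eq_neg_one_mul, mul_zpow, map_mul, mul_eq_one_iff_eq_inv'] at h
  rw [h, ← map_inv, ← zpow_neg]

theorem apply_zpow_mul_zpow_mul (t u w : Fˣ) (m n : ℤ) :
    B (t ^ m * u) (t ^ n * w) = B t ((-1) ^ (-(m * n)) * w ^ m * u ^ (-n)) * B u w := by
  have hpow : B (t ^ m) (t ^ n) = B t ((-1) ^ (-(m * n))) := by
    rw [map_zpow B, MonoidHom.zpow_apply, ← map_zpow, ← zpow_mul, apply_zpow_self hB, mul_comm]
  have hswap : B u (t ^ n) = B t (u ^ (-n)) := by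
    rw [eq_inv_of_mul_eq_one_left (apply_mul_apply_swap hB u (t ^ n)), map_zpow B,
      MonoidHom.zpow_apply, ← map_zpow, ← map_inv, zpow_neg]
  have hleft : B (t ^ m) w = B t (w ^ m) := by
    rw [map_zpow B, MonoidHom.zpow_apply, map_zpow]
  calc B (t ^ m * u) (t ^ n * w)
        = B (t ^ m) (t ^ n) * B (t ^ m) w * (B u (t ^ n) * B u w) := by
          rw [map_mul B, MonoidHom.mul_apply, map_mul (B (t ^ m)), map_mul (B u)]
      _ = B t ((-1) ^ (-(m * n))) * B t (w ^ m) * B t (u ^ (-n)) * B u w := by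
          rw [hpow, hleft, hswap, ← mul_assoc]
      _ = B t ((-1) ^ (-(m * n)) * w ^ m * u ^ (-n)) * B u w := by
          rw [map_mul, map_mul]

end Bimultiplicative

section OfField

variable (c : F → F → A)
  (hmul_left : ∀ x y z : F, x ≠ 0 → y ≠ 0 → z ≠ 0 → c (x * y) z = c x z * c y z)
  (hmul_right : ∀ x y z : F, x ≠ 0 → y ≠ 0 → z ≠ 0 → c x (y * z) = c x y * c x z)

def unitsHom : Fˣ →* Fˣ →* A :=
  MonoidHom.mk'
    (fun a ↦ MonoidHom.mk' (fun b ↦ c a b) fun b b' ↦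
      hmul_right _ _ _ a.ne_zero b.ne_zero b'.ne_zero)
    fun a a' ↦ MonoidHom.ext fun b ↦ hmul_left _ _ _ a.ne_zero a'.ne_zero b.ne_zero

@[simp]
theorem unitsHom_apply (a b : Fˣ) : unitsHom c hmul_left hmul_right a b = c a b :=
  rfl

theorem unitsHom_apply_eq_one_of_add_eq_one
    (hsteinberg : ∀ x : F, x ≠ 0 → x ≠ 1 → c x (1 - x) = 1)
    (a b : Fˣ) (hab : (a : F) + b = 1) :
    unitsHom c hmul_left hmul_right a b = 1 := by
  have hb : (b : F) = 1 - a := eq_sub_of_add_eq' hab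
  rw [unitsHom_apply, hb]
  exact hsteinberg a a.ne_zero fun ha ↦ b.ne_zero (by rw [hb, ha, sub_self])

end OfField

end SteinbergSymbol

theorem stmt_13_general
    (F : Type) [Field F]
    -- `𝒪` is the valuation ring of a surjective discrete valuation on `F`,
    -- with uniformizer `π`:
    (O : Subring F) (pi : F) (hpi0 : pi ≠ 0)
    (hdisc : ∀ x : F, x ≠ 0 →
      ∃ (n : ℤ) (u : F), u ∈ O ∧ (∃ w ∈ O, u * w = 1) ∧ x = pi ^ n * u)
    -- `c` is a Steinberg symbol with values in the abelian group `A`: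
    (A : Type) [CommGroup A]
    (c : F → F → A)
    (hmul_left : ∀ x y z : F, x ≠ 0 → y ≠ 0 → z ≠ 0 → c (x * y) z = c x z * c y z)
    (hmul_right : ∀ x y z : F, x ≠ 0 → y ≠ 0 → z ≠ 0 → c x (y * z) = c x y * c x z)
    (hsteinberg : ∀ x : F, x ≠ 0 → x ≠ 1 → c x (1 - x) = 1)
    (x y : F) (hx : x ≠ 0) (hy : y ≠ 0) :
    ∃ u0 u w : F,
      (u0 ∈ O ∧ ∃ z ∈ O, u0 * z = 1) ∧
      (u ∈ O ∧ ∃ z ∈ O, u * z = 1) ∧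
      (w ∈ O ∧ ∃ z ∈ O, w * z = 1) ∧
      c x y = c pi u0 * c u w := by
  obtain ⟨m, u, huO, huinv, rfl⟩ := hdisc x hx
  obtain ⟨n, w, hwO, hwinv, rfl⟩ := hdisc y hy
  obtain ⟨U, hU, rfl⟩ := (O.toSubmonoid.mem_and_exists_mul_eq_one_iff u).1 ⟨huO, huinv⟩
  obtain ⟨W, hW, rfl⟩ := (O.toSubmonoid.mem_and_exists_mul_eq_one_iff w).1 ⟨hwO, hwinv⟩
  have hneg_one : (-1 : Fˣ) ∈ O.toSubmonoid.units := ⟨by simp, by simp⟩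
  have key := SteinbergSymbol.apply_zpow_mul_zpow_mul
    (SteinbergSymbol.unitsHom_apply_eq_one_of_add_eq_one c hmul_left hmul_right hsteinberg)
    (Units.mk0 pi hpi0) U W m n
  refine ⟨↑((-1) ^ (-(m * n)) * W ^ m * U ^ (-n)), U, W,
    (O.toSubmonoid.mem_and_exists_mul_eq_one_iff _).2 ⟨_, ?_, rfl⟩,
    (O.toSubmonoid.mem_and_exists_mul_eq_one_iff _).2 ⟨U, hU, rfl⟩,
    (O.toSubmonoid.mem_and_exists_mul_eq_one_iff _).2 ⟨W, hW, rfl⟩, ?_⟩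
  · exact mul_mem (mul_mem (zpow_mem hneg_one _) (zpow_mem hW m)) (zpow_mem hU _)
  · simpa only [SteinbergSymbol.unitsHom_apply, Units.val_mul, Units.val_zpow_eq_zpow_val,
      Units.val_mk0] using key

theorem stmt_13
    (F : Type) [Field F]
    -- `𝒪` is the valuation ring of a surjective discrete valuation on `F`,
    -- with uniformizer `π`:
    (O : Subring F) (pi : F) (hpimem : pi ∈ O) (hpi0 : pi ≠ 0)
    (hpinotunit : ¬ ∃ z ∈ O, pi * z = 1)
    (hval : ∀ x : F, x ≠ 0 → x ∈ O ∨ x⁻¹ ∈ O)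
    (hdisc : ∀ x : F, x ≠ 0 →
      ∃ (n : ℤ) (u : F), u ∈ O ∧ (∃ w ∈ O, u * w = 1) ∧ x = pi ^ n * u)
    -- `c` is a Steinberg symbol with values in the abelian group `A`:
    (A : Type) [CommGroup A]
    (c : F → F → A)
    (hmul_left : ∀ x y z : F, x ≠ 0 → y ≠ 0 → z ≠ 0 → c (x * y) z = c x z * c y z)
    (hmul_right : ∀ x y z : F, x ≠ 0 → y ≠ 0 → z ≠ 0 → c x (y * z) = c x y * c x z)
    (hsteinberg : ∀ x : F, x ≠ 0 → x ≠ 1 → c x (1 - x) = 1)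
    (x y : F) (hx : x ≠ 0) (hy : y ≠ 0) :
    ∃ u0 u w : F,
      (u0 ∈ O ∧ ∃ z ∈ O, u0 * z = 1) ∧
      (u ∈ O ∧ ∃ z ∈ O, u * z = 1) ∧
      (w ∈ O ∧ ∃ z ∈ O, w * z = 1) ∧
      c x y = c pi u0 * c u w :=
  stmt_13_general F O pi hpi0 hdisc A c hmul_left hmul_right hsteinberg x y hx hy
end

section
/- Let c : F^× × F^× → A be a Steinberg symbol. Then for every u ∈ U^2 (i.e., u a unit of 𝒪 with u − 1 ∈ 𝔪^2) there exist a, b ∈ U^1 (units of 𝒪 with a − 1, b − 1 ∈ 𝔪) such that c(π, u) = c(a, b). -/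
/-!
Put `u = 1 + π² y` and `t = 1 - π y (1 - π)`, so that `1 - π t = (1 - π) u`. Since
`c(π, 1 - π) = 1` we get `c(π, u) = c(π, 1 - π t)`, and since `c(π t, 1 - π t) = 1` we get
`c(π, 1 - π t) = c(t⁻¹, 1 - π t)`. Both `t⁻¹` and `1 - π t` lie in `U¹`.
-/

section PrincipalUnits

variable {F : Type*} [Field F] {O : Subring F} {pi : F}

def principalUnits (O : Subring F) (pi : F) : Set F :=
  {x | x ∈ O ∧ (∃ z ∈ O, x * z = 1) ∧ ∃ y ∈ O, x - 1 = pi * y}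

lemma ne_zero_of_mem_principalUnits {x : F} (hx : x ∈ principalUnits O pi) : x ≠ 0 := by
  obtain ⟨-, ⟨z, -, hxz⟩, -⟩ := hx
  exact left_ne_zero_of_mul_eq_one hxz

lemma inv_mem_principalUnits {x : F} (hx : x ∈ principalUnits O pi) :
    x⁻¹ ∈ principalUnits O pi := by
  obtain ⟨hxO, ⟨z, hzO, hxz⟩, y, hyO, hxy⟩ := hx
  rw [inv_eq_of_mul_eq_one_right hxz]
  exact ⟨hzO, ⟨x, hxO, by rw [mul_comm, hxz]⟩, -(y * z), O.neg_mem (O.mul_mem hyO hzO),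
    by linear_combination hxz - z * hxy⟩

-- `O` is a valuation ring, so its non-units form an ideal and `1 + π m` is a unit:
-- `x⁻¹ = 1 - π m / x`, and `π m / x ∉ O` would force `x / (π m) ∈ O`, making `π` a unit.
lemma mem_principalUnits_iff (hpimem : pi ∈ O) (hpinotunit : ¬ ∃ z ∈ O, pi * z = 1)
    (hval : ∀ x : F, x ≠ 0 → x ∈ O ∨ x⁻¹ ∈ O) {x : F} :
    x ∈ principalUnits O pi ↔ ∃ m ∈ O, x - 1 = pi * m := by
  refine ⟨fun hx => hx.2.2, fun ⟨m, hm, hxm⟩ => ?_⟩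
  have hx : x = 1 + pi * m := by linear_combination hxm
  have hx0 : x ≠ 0 := fun h => hpinotunit ⟨-m, O.neg_mem hm, by linear_combination hx - h⟩
  suffices hq : pi * m / x ∈ O by
    refine ⟨hx ▸ O.add_mem O.one_mem (O.mul_mem hpimem hm),
      ⟨x⁻¹, ?_, mul_inv_cancel₀ hx0⟩, m, hm, hxm⟩
    have hinv : x⁻¹ = 1 - pi * m / x := by
      rw [show pi * m = x - 1 by rw [hx]; ring, sub_div, div_self hx0, one_div]; ring
    rw [hinv]
    exact O.sub_mem O.one_mem hq
  by_contra hq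
  have hq0 : pi * m / x ≠ 0 := fun h => hq (h ▸ O.zero_mem)
  have hpm : pi * m ≠ 0 := fun h => hq0 (by rw [h, zero_div])
  refine hpinotunit ⟨m * ((pi * m / x)⁻¹ - 1),
    O.mul_mem hm (O.sub_mem ((hval _ hq0).resolve_left hq) O.one_mem), ?_⟩
  rw [inv_div, mul_sub_one, mul_sub, ← mul_assoc, mul_div_cancel₀ _ hpm, hx]
  ring

end PrincipalUnits

section SteinbergSymbol

variable {F : Type*} [Field F] {A : Type*} [CommGroup A]

lemma map_one_of_map_mul {f : F → A}
    (hf : ∀ x y : F, x ≠ 0 → y ≠ 0 → f (x * y) = f x * f y) : f 1 = 1 := by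
  simpa using hf 1 1 one_ne_zero one_ne_zero

lemma map_inv_of_map_mul {f : F → A}
    (hf : ∀ x y : F, x ≠ 0 → y ≠ 0 → f (x * y) = f x * f y) {x : F} (hx : x ≠ 0) :
    f x⁻¹ = (f x)⁻¹ :=
  eq_inv_of_mul_eq_one_right <| by
    rw [← hf x x⁻¹ hx (inv_ne_zero hx), mul_inv_cancel₀ hx, map_one_of_map_mul hf]

variable {c : F → F → A}

lemma symbol_one_sub_mul_right
    (hmul_right : ∀ x y z : F, x ≠ 0 → y ≠ 0 → z ≠ 0 → c x (y * z) = c x y * c x z)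
    (hsteinberg : ∀ x : F, x ≠ 0 → x ≠ 1 → c x (1 - x) = 1)
    {x y : F} (hx0 : x ≠ 0) (hx1 : x ≠ 1) (hy : y ≠ 0) :
    c x ((1 - x) * y) = c x y := by
  rw [hmul_right x _ _ hx0 (sub_ne_zero.2 hx1.symm) hy, hsteinberg x hx0 hx1, one_mul]

lemma symbol_left_eq_inv_of_one_sub_mul
    (hmul_left : ∀ x y z : F, x ≠ 0 → y ≠ 0 → z ≠ 0 → c (x * y) z = c x z * c y z)
    (hsteinberg : ∀ x : F, x ≠ 0 → x ≠ 1 → c x (1 - x) = 1)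
    {x t : F} (hx : x ≠ 0) (ht : t ≠ 0) (hxt : x * t ≠ 1) :
    c x (1 - x * t) = c t⁻¹ (1 - x * t) := by
  have hb : 1 - x * t ≠ 0 := sub_ne_zero.2 hxt.symm
  have h := hsteinberg (x * t) (mul_ne_zero hx ht) hxt
  rw [hmul_left x t _ hx ht hb] at h
  rw [map_inv_of_map_mul (f := fun a => c a (1 - x * t))
    (fun a b ha hb' => hmul_left a b _ ha hb' hb) ht]
  exact eq_inv_of_mul_eq_one_left h

end SteinbergSymbol

theorem stmt_14_general
    (F : Type) [Field F]
    -- `𝒪` is the valuation ring of a surjective discrete valuation on `F`,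
    -- with uniformizer `π`:
    (O : Subring F) (pi : F) (hpimem : pi ∈ O) (hpi0 : pi ≠ 0)
    (hpinotunit : ¬ ∃ z ∈ O, pi * z = 1)
    (hval : ∀ x : F, x ≠ 0 → x ∈ O ∨ x⁻¹ ∈ O)
    -- `c` is a Steinberg symbol with values in the abelian group `A`:
    (A : Type) [CommGroup A]
    (c : F → F → A)
    (hmul_left : ∀ x y z : F, x ≠ 0 → y ≠ 0 → z ≠ 0 → c (x * y) z = c x z * c y z)
    (hmul_right : ∀ x y z : F, x ≠ 0 → y ≠ 0 → z ≠ 0 → c x (y * z) = c x y * c x z)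
    (hsteinberg : ∀ x : F, x ≠ 0 → x ≠ 1 → c x (1 - x) = 1)
    -- `u ∈ U^2`, i.e. `u` is a unit of `𝒪` with `u - 1 ∈ 𝔪^2`:
    (u : F) (hu2 : ∃ y ∈ O, u - 1 = pi ^ 2 * y) :
    ∃ a b : F,
      (a ∈ O ∧ (∃ z ∈ O, a * z = 1) ∧ ∃ y ∈ O, a - 1 = pi * y) ∧
      (b ∈ O ∧ (∃ z ∈ O, b * z = 1) ∧ ∃ y ∈ O, b - 1 = pi * y) ∧
      c pi u = c a b := by
  have hU : ∀ {x : F}, x ∈ principalUnits O pi ↔ ∃ m ∈ O, x - 1 = pi * m :=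
    mem_principalUnits_iff hpimem hpinotunit hval
  obtain ⟨y, hyO, hy⟩ := hu2
  have hpi1 : pi ≠ 1 := fun h => hpinotunit ⟨1, O.one_mem, by rw [h, one_mul]⟩
  have hu0 : u ≠ 0 := ne_zero_of_mem_principalUnits <|
    hU.2 ⟨pi * y, O.mul_mem hpimem hyO, by linear_combination hy⟩
  set t := 1 - pi * y * (1 - pi) with ht
  have htU : t ∈ principalUnits O pi :=
    hU.2 ⟨-(y * (1 - pi)), O.neg_mem (O.mul_mem hyO (O.sub_mem O.one_mem hpimem)), by ring⟩
  have hbU : 1 - pi * t ∈ principalUnits O pi := hU.2 ⟨-t, O.neg_mem htU.1, by ring⟩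
  refine ⟨t⁻¹, 1 - pi * t, inv_mem_principalUnits htU, hbU, ?_⟩
  calc c pi u = c pi ((1 - pi) * u) :=
        (symbol_one_sub_mul_right hmul_right hsteinberg hpi0 hpi1 hu0).symm
    _ = c pi (1 - pi * t) := by rw [ht]; congr 1; linear_combination (1 - pi) * hy
    _ = c t⁻¹ (1 - pi * t) := symbol_left_eq_inv_of_one_sub_mul hmul_left hsteinberg hpi0
        (ne_zero_of_mem_principalUnits htU) fun h => hpinotunit ⟨t, htU.1, h⟩

theorem stmt_14
    (F : Type) [Field F]
    -- `𝒪` is the valuation ring of a surjective discrete valuation on `F`,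
    -- with uniformizer `π`:
    (O : Subring F) (pi : F) (hpimem : pi ∈ O) (hpi0 : pi ≠ 0)
    (hpinotunit : ¬ ∃ z ∈ O, pi * z = 1)
    (hval : ∀ x : F, x ≠ 0 → x ∈ O ∨ x⁻¹ ∈ O)
    (hdisc : ∀ x : F, x ≠ 0 →
      ∃ (n : ℤ) (u : F), u ∈ O ∧ (∃ w ∈ O, u * w = 1) ∧ x = pi ^ n * u)
    -- `c` is a Steinberg symbol with values in the abelian group `A`:
    (A : Type) [CommGroup A]
    (c : F → F → A)
    (hmul_left : ∀ x y z : F, x ≠ 0 → y ≠ 0 → z ≠ 0 → c (x * y) z = c x z * c y z)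
    (hmul_right : ∀ x y z : F, x ≠ 0 → y ≠ 0 → z ≠ 0 → c x (y * z) = c x y * c x z)
    (hsteinberg : ∀ x : F, x ≠ 0 → x ≠ 1 → c x (1 - x) = 1)
    -- `u ∈ U^2`, i.e. `u` is a unit of `𝒪` with `u - 1 ∈ 𝔪^2`:
    (u : F) (humem : u ∈ O) (huunit : ∃ z ∈ O, u * z = 1)
    (hu2 : ∃ y ∈ O, u - 1 = pi ^ 2 * y) :
    ∃ a b : F,
      (a ∈ O ∧ (∃ z ∈ O, a * z = 1) ∧ ∃ y ∈ O, a - 1 = pi * y) ∧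
      (b ∈ O ∧ (∃ z ∈ O, b * z = 1) ∧ ∃ y ∈ O, b - 1 = pi * y) ∧
      c pi u = c a b :=
  stmt_14_general F O pi hpimem hpi0 hpinotunit hval A c hmul_left hmul_right hsteinberg u hu2
end

section
/- Suppose that for each finite place v of F an additive subgroup R_v ⊆ 𝒪_v is given such that R_v = 𝒪_v for all but finitely many v and such that for each v there exists a positive integer N_v with N_v·𝒪_v ⊆ R_v. Then for every adele α ∈ 𝔸_F there exist β ∈ F and an adele r ∈ 𝔸_F whose component at every finite place v lies in R_v (with no constraint at the infinite places), such that α = diag(β) − r. In particular, 𝔸_F = diag(F) + (∏_{v finite} R_v × ∏_{v infinite} F_v). -/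
/-!
The finite part `α_f` of an adele is integral outside a finite set `S` of places. Since `K` is
dense in each `K_v`, for `v ∈ S` there is `t_v ∈ K` with `t_v - α_v ∈ 𝒪_v`. With `d` a common
denominator of the `t_v`, the Chinese remainder theorem modulo the prime powers dividing `d`
gives `b ∈ 𝒪` with `b/d - t_v ∈ 𝒪_v` at every `v` (taking `t_v = 0` off `S`); hence
`𝔸_f = K + ∏ 𝒪_v`. Applying this to `α_f / N`, where `N` is the product of the `N_v` over the
finitely many `v` with `R_v ≠ 𝒪_v`, gives `𝔸_f = K + N·∏ 𝒪_v ⊆ K + ∏ R_v`.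
-/

open IsDedekindDomain NumberField

namespace IsDedekindDomain.HeightOneSpectrum

variable {R : Type*} [CommRing R] [IsDedekindDomain R] {K : Type*} [Field K] [Algebra R K]
  [IsFractionRing R K]

theorem exists_intValuation_sub_le {d : R} (hd : d ≠ 0) (x : HeightOneSpectrum R → R) :
    ∃ b : R, ∀ v : HeightOneSpectrum R, v.intValuation (b - x v) ≤ v.intValuation d := by
  classical
  have hfin : {v : HeightOneSpectrum R | v.asIdeal ∣ Ideal.span {d}}.Finite :=
    Ideal.finite_factors (by simpa [Ideal.span_singleton_eq_bot] using hd)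
  let e (v : HeightOneSpectrum R) := multiplicity v.asIdeal (Ideal.span {d})
  obtain ⟨b, hb⟩ := exists_forall_sub_mem_ideal (s := hfin.toFinset) asIdeal e
    (fun v _ => v.prime) (fun v _ w _ hvw h => hvw (HeightOneSpectrum.ext h)) (fun v => x v)
  refine ⟨b, fun v => ?_⟩
  -- off the finitely many `v ∣ d` the exponent `ord_v d` is `0`, so there is nothing to prove
  rw [intValuation_eq_exp_neg_multiplicity v hd, intValuation_le_pow_iff_mem]
  by_cases hv : v ∈ hfin.toFinset
  · exact hb v hv
  · rw [Set.Finite.mem_toFinset, Set.mem_ofPred_eq, ← multiplicity_eq_zero] at hv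
    simp [hv]

open scoped nonZeroDivisors in
theorem exists_valuation_sub_le_one {t : HeightOneSpectrum R → K}
    (ht : (Function.support t).Finite) :
    ∃ β : K, ∀ v : HeightOneSpectrum R, v.valuation K (β - t v) ≤ 1 := by
  obtain ⟨d, hd⟩ := IsLocalization.exist_integer_multiples R⁰ ht.toFinset t
  have hint : ∀ v, IsLocalization.IsInteger R ((d : R) • t v) := by
    intro v
    by_cases hv : v ∈ ht.toFinset
    · exact hd v hv
    · rw [Set.Finite.mem_toFinset, Function.notMem_support] at hv
      rw [hv, smul_zero]
      exact IsLocalization.isInteger_zero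
  choose x hx using hint
  obtain ⟨b, hb⟩ := exists_intValuation_sub_le (nonZeroDivisors.coe_ne_zero d) x
  have hd0 : algebraMap R K d ≠ 0 := IsFractionRing.to_map_ne_zero_of_mem_nonZeroDivisors d.2
  refine ⟨algebraMap R K b / algebraMap R K d, fun v => ?_⟩
  have hsub : algebraMap R K b / algebraMap R K d - t v =
      algebraMap R K (b - x v) / algebraMap R K d := by
    rw [map_sub, hx, Algebra.smul_def]
    field_simp
  rw [hsub, map_div₀, valuation_of_algebraMap, valuation_of_algebraMap]
  exact div_le_one_of_le₀ (hb v) zero_le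

theorem exists_sub_mem_adicCompletionIntegers (v : HeightOneSpectrum R)
    (x : v.adicCompletion K) :
    ∃ t : K, algebraMap K (v.adicCompletion K) t - x ∈ v.adicCompletionIntegers K := by
  have hopen : IsOpen {y : v.adicCompletion K | y - x ∈ v.adicCompletionIntegers K} :=
    (Valued.isOpen_valuationSubring _).preimage (continuous_id.sub continuous_const)
  exact (denseRange_algebraMap (K := K) v).exists_mem_open hopen
    ⟨x, by simp only [Set.mem_ofPred_eq, sub_self, zero_mem]⟩

end IsDedekindDomain.HeightOneSpectrum

namespace IsDedekindDomain.FiniteAdeleRing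

open HeightOneSpectrum

variable {R : Type*} [CommRing R] [IsDedekindDomain R] {K : Type*} [Field K] [Algebra R K]
  [IsFractionRing R K]

theorem exists_sub_mem_adicCompletionIntegers (α : FiniteAdeleRing R K) :
    ∃ β : K, ∀ v : HeightOneSpectrum R,
      algebraMap K (v.adicCompletion K) β - α v ∈ v.adicCompletionIntegers K := by
  classical
  choose t ht using fun v => HeightOneSpectrum.exists_sub_mem_adicCompletionIntegers v (α v)
  let t' v := if α v ∈ v.adicCompletionIntegers K then 0 else t v
  have hsupp : (Function.support t').Finite :=
    (Filter.eventually_cofinite.mp α.2).subset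
      (Function.support_subset_iff'.2 fun v hv => if_pos (not_not.mp hv))
  obtain ⟨β, hβ⟩ := exists_valuation_sub_le_one hsupp
  refine ⟨β, fun v => ?_⟩
  have hsplit : algebraMap K (v.adicCompletion K) β - α v =
      algebraMap K _ (β - t' v) + (algebraMap K _ (t' v) - α v) := by
    rw [map_sub]; ring
  rw [hsplit]
  refine add_mem ?_ ?_
  · rw [mem_adicCompletionIntegers]
    exact (valuedAdicCompletion_eq_valuation' v _).trans_le (hβ v)
  · by_cases h : α v ∈ v.adicCompletionIntegers K
    · simp [t', h]
    · simpa [t', h] using ht v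

theorem exists_sub_eq_mul_mem_adicCompletionIntegers (α : FiniteAdeleRing R K) {c : K}
    (hc : c ≠ 0) : ∃ β : K, ∀ v : HeightOneSpectrum R, ∃ y ∈ v.adicCompletionIntegers K,
      algebraMap K (v.adicCompletion K) β - α v = algebraMap K _ c * y := by
  obtain ⟨β, hβ⟩ := exists_sub_mem_adicCompletionIntegers (algebraMap K _ c⁻¹ * α)
  refine ⟨c * β, fun v => ⟨_, hβ v, ?_⟩⟩
  have hc' : algebraMap K (v.adicCompletion K) c ≠ 0 := (map_ne_zero _).2 hc
  change _ = _ * (_ - algebraMap K _ c⁻¹ * α v)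
  rw [map_mul, map_inv₀]
  field_simp

end IsDedekindDomain.FiniteAdeleRing

theorem exists_nat_mul_mem_of_finite {ι : Type*} {A : ι → Type*} [∀ i, Ring (A i)]
    (O : ∀ i, Subring (A i)) (G : ∀ i, AddSubgroup (A i))
    (hfin : {i | (G i : Set (A i)) ≠ O i}.Finite)
    (hN : ∀ i, ∃ N : ℕ, 0 < N ∧ ∀ x ∈ O i, (N : A i) * x ∈ G i) :
    ∃ N : ℕ, 0 < N ∧ ∀ i, ∀ x ∈ O i, (N : A i) * x ∈ G i := by
  classical
  choose N hNpos hNmem using hN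
  refine ⟨∏ i ∈ hfin.toFinset, N i, Finset.prod_pos fun i _ => hNpos i, fun i x hx => ?_⟩
  by_cases hi : i ∈ hfin.toFinset
  · rw [← Finset.mul_prod_erase _ _ hi, Nat.cast_mul, mul_assoc]
    exact hNmem i _ (mul_mem (natCast_mem _ _) hx)
  · rw [Set.Finite.mem_toFinset, Set.mem_ofPred_eq, not_not] at hi
    rw [← SetLike.mem_coe, hi]
    exact mul_mem (natCast_mem _ _) hx

theorem stmt_15_general
    (K : Type) [Field K] [NumberField K]
    -- at each finite place `v`, an additive subgroup `R_v ⊆ 𝒪_v` is given: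
    (Rv : ∀ v : HeightOneSpectrum (𝓞 K), AddSubgroup (v.adicCompletion K))
    -- `R_v = 𝒪_v` for all but finitely many `v`:
    (hae : {v : HeightOneSpectrum (𝓞 K) |
      (Rv v : Set (v.adicCompletion K)) ≠
        (v.adicCompletionIntegers K : Set (v.adicCompletion K))}.Finite)
    -- for each `v` there is a positive integer `N_v` with `N_v · 𝒪_v ⊆ R_v`:
    (hN : ∀ v : HeightOneSpectrum (𝓞 K), ∃ N : ℕ, 0 < N ∧
      ∀ x ∈ v.adicCompletionIntegers K, (N : v.adicCompletion K) * x ∈ Rv v) :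
    -- every adele is the difference of a principal adele and an adele whose components at
    -- all finite places lie in the `R_v` (with no constraint at the infinite places):
    ∀ α : AdeleRing (𝓞 K) K, ∃ (β : K) (r : AdeleRing (𝓞 K) K),
      (∀ v : HeightOneSpectrum (𝓞 K), r.2 v ∈ Rv v) ∧
      α = algebraMap K (AdeleRing (𝓞 K) K) β - r := by
  intro α
  obtain ⟨N, hNpos, hNmem⟩ :=
    exists_nat_mul_mem_of_finite (fun v => (v.adicCompletionIntegers K).toSubring) Rv hae hN
  obtain ⟨β, hβ⟩ := FiniteAdeleRing.exists_sub_eq_mul_mem_adicCompletionIntegers α.2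
    (Nat.cast_ne_zero.2 hNpos.ne' : (N : K) ≠ 0)
  refine ⟨β, algebraMap K _ β - α, fun v => ?_, (sub_sub_cancel _ _).symm⟩
  obtain ⟨y, hy, hβy⟩ := hβ v
  change algebraMap K (v.adicCompletion K) β - α.2 v ∈ Rv v
  rw [hβy, map_natCast]
  exact hNmem v y hy

theorem stmt_15
    (K : Type) [Field K] [NumberField K]
    -- at each finite place `v`, an additive subgroup `R_v ⊆ 𝒪_v` is given:
    (Rv : ∀ v : HeightOneSpectrum (𝓞 K), AddSubgroup (v.adicCompletion K))
    (hsub : ∀ v : HeightOneSpectrum (𝓞 K),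
      (Rv v : Set (v.adicCompletion K)) ⊆ (v.adicCompletionIntegers K : Set (v.adicCompletion K)))
    -- `R_v = 𝒪_v` for all but finitely many `v`:
    (hae : {v : HeightOneSpectrum (𝓞 K) |
      (Rv v : Set (v.adicCompletion K)) ≠
        (v.adicCompletionIntegers K : Set (v.adicCompletion K))}.Finite)
    -- for each `v` there is a positive integer `N_v` with `N_v · 𝒪_v ⊆ R_v`:
    (hN : ∀ v : HeightOneSpectrum (𝓞 K), ∃ N : ℕ, 0 < N ∧
      ∀ x ∈ v.adicCompletionIntegers K, (N : v.adicCompletion K) * x ∈ Rv v) :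
    -- every adele is the difference of a principal adele and an adele whose components at
    -- all finite places lie in the `R_v` (with no constraint at the infinite places):
    ∀ α : AdeleRing (𝓞 K) K, ∃ (β : K) (r : AdeleRing (𝓞 K) K),
      (∀ v : HeightOneSpectrum (𝓞 K), r.2 v ∈ Rv v) ∧
      α = algebraMap K (AdeleRing (𝓞 K) K) β - r :=
  stmt_15_general K Rv hae hN
end
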